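/- arXiv:1408.4196 — 3 statements merged into one kernel-verified Lean document; each statement's English description precedes it below -/
import Mathlib

section
/- Consider a lazy random walk {X_i} on ℤ with i.i.d. steps uniform on {-1, 0, 1}, starting from X_0 = 1. There exists a constant c > 0 such that for all sufficiently large n and all t ≥ n³/2, P(X_t = 1 and X_1, ..., X_t ∈ [1, n]) ≥ exp(-c t / n²). -/
open MeasureTheory Finset ProbabilityTheory

private lemma indep_aux {Ω : Type*} [MeasurableSpace Ω] (μ : Measure Ω)
    (ξ : ℕ → Ω → ℤ) (hmeas : ∀ i, Measurable (ξ i))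
    (hindep : iIndepFun ξ μ)
    (s : ℕ) (e : ℤ) (B : Set Ω) (hB : ∀ ω ω', (∀ i < s, ξ i ω = ξ i ω') → ω ∈ B → ω' ∈ B) :
    μ (B ∩ ξ s ⁻¹' {e}) = μ B * μ (ξ s ⁻¹' {e}) := by
  classical
  have hdisj : Disjoint (Finset.range s) ({s} : Finset ℕ) := by simp
  have hIF := hindep.indepFun_finset (Finset.range s) {s} hdisj hmeas
  set G : Ω → ((↑(Finset.range s) : Type) → ℤ) := fun a i => ξ i a with hG
  set H : Ω → ((↑({s} : Finset ℕ) : Type) → ℤ) := fun a i => ξ i a with hH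
  have hBpre : B = G ⁻¹' (G '' B) := by
    apply Set.Subset.antisymm (Set.subset_preimage_image G B)
    rintro ω ⟨ω', hω', hGω⟩
    exact hB ω' ω (fun i hi => congrFun hGω ⟨i, Finset.mem_range.2 hi⟩) hω'
  have hHpre : ξ s ⁻¹' {e} = H ⁻¹' {v | v ⟨s, Finset.mem_singleton_self s⟩ = e} := rfl
  have hmA : MeasurableSet (G '' B) := (Set.to_countable _).measurableSet
  have hmB : MeasurableSet
      {v : (↑({s} : Finset ℕ) : Type) → ℤ | v ⟨s, Finset.mem_singleton_self s⟩ = e} :=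
    (Set.to_countable _).measurableSet
  calc μ (B ∩ ξ s ⁻¹' {e}) = μ (G ⁻¹' (G '' B) ∩ H ⁻¹' _) := by rw [← hBpre, ← hHpre]
    _ = μ (G ⁻¹' (G '' B)) * μ (H ⁻¹' _) := hIF.measure_inter_preimage_eq_mul _ _ hmA hmB
    _ = μ B * μ (ξ s ⁻¹' {e}) := by rw [← hBpre, ← hHpre]

private lemma exp_le_one_sub {x : ℝ} (hx0 : 0 ≤ x) (hx : x ≤ 1/2) :
    Real.exp (-(2*x)) ≤ 1 - x := by
  have h1 : (1:ℝ) + 2*x ≤ Real.exp (2*x) := by linarith [Real.add_one_le_exp (2*x)]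
  have hp : (0:ℝ) < 1 + 2*x := by linarith
  have h2 : Real.exp (-(2*x)) = (Real.exp (2*x))⁻¹ := Real.exp_neg _
  have h3 : (Real.exp (2*x))⁻¹ ≤ (1 + 2*x)⁻¹ := inv_anti₀ hp h1
  have h4 : (1 + 2*x)⁻¹ ≤ 1 - x := by
    rw [inv_le_iff_one_le_mul₀ hp]
    nlinarith
  linarith [h2 ▸ h3]

private lemma numeric_aux (n t : ℕ) (hn10 : (10:ℝ) ≤ (n:ℝ)) (ht : (n:ℝ)^3/2 ≤ (t:ℝ)) :
    Real.exp (-20*(t:ℝ)/(n:ℝ)^2) ≤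
      (1/3:ℝ)^(2*n) *
        (((1 + 2*Real.cos (Real.pi/((n:ℝ)+1)))/3)^t * Real.sin (Real.pi/((n:ℝ)+1)) / (n:ℝ)) := by
  have hnpos : (0:ℝ) < n := by linarith
  set θ : ℝ := Real.pi / ((n:ℝ)+1) with hθ
  set lam : ℝ := 1 + 2 * Real.cos θ with hlam
  have hθpos : 0 < θ := by positivity
  have hθle1 : θ ≤ 1 := by
    rw [hθ, div_le_one (by positivity)]
    linarith [Real.pi_lt_four]
  have hcos : 1 - θ^2/2 ≤ Real.cos θ := Real.one_sub_sq_div_two_le_cos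
  have hlamlb : 3 - θ^2 ≤ lam := by rw [hlam]; nlinarith
  have hlam0 : (0:ℝ) ≤ lam := by nlinarith [hθle1, hθpos]
  -- numeric bounds
  have hπub : Real.pi^2 ≤ 10 := by nlinarith [Real.pi_lt_d2, Real.pi_pos]
  have hθub : θ^2 ≤ 10 / (n:ℝ)^2 := by
    rw [hθ, div_pow]
    apply div_le_div₀ (by norm_num) hπub (by positivity) (by nlinarith [hnpos])
  -- part (a): exp(-7t/n²) ≤ (lam/3)^t
  have ha : Real.exp (-(7*(t:ℝ)/(n:ℝ)^2)) ≤ (lam/3)^t := by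
    have hx2 : θ^2/3 ≤ 1/2 := by nlinarith [hθle1, hθpos]
    have h1 : Real.exp (-(2*(θ^2/3))) ≤ 1 - θ^2/3 :=
      exp_le_one_sub (by positivity) hx2
    have h2 : 1 - θ^2/3 ≤ lam/3 := by linarith [hlamlb]
    have h3 : Real.exp (-(7/(n:ℝ)^2)) ≤ Real.exp (-(2*(θ^2/3))) := by
      apply Real.exp_le_exp.2
      have h4 : (0:ℝ) < (n:ℝ)^2 := by positivity
      have e1 : 2*(θ^2/3) ≤ 2*((10/(n:ℝ)^2)/3) := by linarith [hθub]
      have e2 : 2*((10/(n:ℝ)^2)/3) = 20/(3*(n:ℝ)^2) := by ring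
      have e3 : 20/(3*(n:ℝ)^2) ≤ 7/(n:ℝ)^2 := by
        rw [div_le_div_iff₀ (by positivity) h4]
        nlinarith [h4]
      linarith
    have h4 : Real.exp (-(7/(n:ℝ)^2)) ≤ lam/3 := le_trans h3 (le_trans h1 h2)
    calc Real.exp (-(7*(t:ℝ)/(n:ℝ)^2)) = (Real.exp (-(7/(n:ℝ)^2)))^t := by
          rw [← Real.exp_nat_mul]; congr 1; ring
      _ ≤ (lam/3)^t := pow_le_pow_left₀ (Real.exp_nonneg _) h4 t
  -- lower bound on sin θ
  have hsinlb : 1/(n:ℝ) ≤ Real.sin θ := by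
    have hθlb : 3/(2*(n:ℝ)) ≤ θ := by
      rw [hθ]
      apply div_le_div₀ Real.pi_pos.le Real.pi_gt_three.le (by positivity) (by linarith)
    have hsin1 : θ - θ^3/4 < Real.sin θ := by
      have := Real.sin_gt_sub_cube hθpos
      nlinarith [pow_pos hθpos 3]
    have hθ3 : θ^3 ≤ θ := by nlinarith [hθpos, hθle1]
    have hsin2 : (3/4)*θ ≤ θ - θ^3/4 := by linarith
    have h9 : (1:ℝ)/(n:ℝ) ≤ (3/4)*(3/(2*(n:ℝ))) := by
      rw [show (3:ℝ)/4*(3/(2*(n:ℝ))) = 9/(8*(n:ℝ)) by ring,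
        div_le_div_iff₀ hnpos (by positivity)]
      linarith
    have h10 : (3/4)*(3/(2*(n:ℝ))) ≤ (3/4)*θ :=
      mul_le_mul_of_nonneg_left hθlb (by norm_num)
    linarith
  -- part (c): exp(-13t/n²) ≤ (1/3)^(2n) * sinθ / n
  have hc : Real.exp (-(13*(t:ℝ)/(n:ℝ)^2)) ≤ (1/3:ℝ)^(2*n) * (Real.sin θ / (n:ℝ)) := by
    have e9 : (9:ℝ)^n ≤ Real.exp (3*(n:ℝ)) := by
      have h27 : (2.7182818283:ℝ)^3 ≤ (Real.exp 1)^3 :=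
        pow_le_pow_left₀ (by norm_num) Real.exp_one_gt_d9.le 3
      have h3 : Real.exp 3 = Real.exp 1 ^ 3 := by
        rw [← Real.exp_nat_mul]; norm_num
      have h9e : (9:ℝ) ≤ Real.exp 3 := by
        rw [h3]
        calc (9:ℝ) ≤ (2.7182818283:ℝ)^3 := by norm_num
          _ ≤ _ := h27
      calc (9:ℝ)^n ≤ (Real.exp 3)^n := pow_le_pow_left₀ (by norm_num) h9e n
        _ = Real.exp (3*(n:ℝ)) := by rw [← Real.exp_nat_mul]; ring_nf
    have en : (n:ℝ) ≤ Real.exp (n:ℝ) := by linarith [Real.add_one_le_exp (n:ℝ)]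
    have key : (9:ℝ)^n * ((n:ℝ)*(n:ℝ)) ≤ Real.exp (13*(t:ℝ)/(n:ℝ)^2) := by
      have hprod : (9:ℝ)^n * ((n:ℝ)*(n:ℝ)) ≤ Real.exp (3*(n:ℝ)) * (Real.exp (n:ℝ) * Real.exp (n:ℝ)) := by
        apply mul_le_mul e9 ?_ (by positivity) (Real.exp_nonneg _)
        exact mul_le_mul en en hnpos.le (Real.exp_nonneg _)
      have hE : Real.exp (3*(n:ℝ)) * (Real.exp (n:ℝ) * Real.exp (n:ℝ)) = Real.exp (5*(n:ℝ)) := by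
        rw [← Real.exp_add, ← Real.exp_add]; ring_nf
      have h5n : (5:ℝ)*(n:ℝ) ≤ 13*(t:ℝ)/(n:ℝ)^2 := by
        rw [le_div_iff₀ (by positivity : (0:ℝ) < (n:ℝ)^2)]
        nlinarith [ht, hnpos]
      calc (9:ℝ)^n * ((n:ℝ)*(n:ℝ)) ≤ Real.exp (5*(n:ℝ)) := by rw [← hE]; exact hprod
        _ ≤ Real.exp (13*(t:ℝ)/(n:ℝ)^2) := Real.exp_le_exp.2 h5n
    have hposA : (0:ℝ) < (9:ℝ)^n * ((n:ℝ)*(n:ℝ)) := by positivity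
    have hinv : Real.exp (-(13*(t:ℝ)/(n:ℝ)^2)) ≤ ((9:ℝ)^n * ((n:ℝ)*(n:ℝ)))⁻¹ := by
      rw [Real.exp_neg]
      exact inv_anti₀ hposA key
    have hpow9 : (1/3:ℝ)^(2*n) = ((9:ℝ)^n)⁻¹ := by
      rw [pow_mul]
      norm_num
      rw [one_div, inv_pow]
    have heq : ((9:ℝ)^n * ((n:ℝ)*(n:ℝ)))⁻¹ = (1/3:ℝ)^(2*n) * ((1/(n:ℝ))*(1/(n:ℝ))) := by
      rw [hpow9]
      field_simp
    have hfin2 : (1/3:ℝ)^(2*n) * ((1/(n:ℝ))*(1/(n:ℝ))) ≤ (1/3:ℝ)^(2*n) * (Real.sin θ / (n:ℝ)) := by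
      apply mul_le_mul_of_nonneg_left ?_ (by positivity)
      rw [div_eq_mul_one_div (Real.sin θ) (n:ℝ)]
      apply mul_le_mul_of_nonneg_right hsinlb (by positivity)
    calc Real.exp (-(13*(t:ℝ)/(n:ℝ)^2)) ≤ ((9:ℝ)^n * ((n:ℝ)*(n:ℝ)))⁻¹ := hinv
      _ = (1/3:ℝ)^(2*n) * ((1/(n:ℝ))*(1/(n:ℝ))) := heq
      _ ≤ (1/3:ℝ)^(2*n) * (Real.sin θ / (n:ℝ)) := hfin2
  -- combine
  have hsplit : Real.exp (-20*(t:ℝ)/(n:ℝ)^2)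
      = Real.exp (-(7*(t:ℝ)/(n:ℝ)^2)) * Real.exp (-(13*(t:ℝ)/(n:ℝ)^2)) := by
    rw [← Real.exp_add]; congr 1; ring
  rw [hsplit]
  calc Real.exp (-(7*(t:ℝ)/(n:ℝ)^2)) * Real.exp (-(13*(t:ℝ)/(n:ℝ)^2))
      ≤ (lam/3)^t * ((1/3:ℝ)^(2*n) * (Real.sin θ / (n:ℝ))) :=
        mul_le_mul ha hc (Real.exp_nonneg _) (pow_nonneg (by linarith [hlam0]) t)
    _ = (1/3:ℝ)^(2*n) * ((lam/3)^t * Real.sin θ / (n:ℝ)) := by ring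

/-- For the lazy random walk on `ℤ` with i.i.d. steps uniform on `{-1,0,1}`
started at `1`, there is `c > 0` such that for all large `n` and all
`t ≥ n³/2`, the probability of being back at `1` at time `t` while staying in
`[1,n]` at all times `1,…,t` is at least `exp(-c t / n²)`. -/
theorem lazy_walk_confinement {Ω : Type*} [MeasurableSpace Ω]
    (μ : Measure Ω) [IsProbabilityMeasure μ]
    (ξ : ℕ → Ω → ℤ) (hmeas : ∀ i, Measurable (ξ i))
    (hindep : iIndepFun ξ μ)
    (hunif : ∀ i, ∀ z ∈ ({-1, 0, 1} : Set ℤ), μ {ω | ξ i ω = z} = 1 / 3)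
    (X : ℕ → Ω → ℤ) (hX : ∀ t ω, X t ω = 1 + ∑ i ∈ range t, ξ i ω) :
    ∃ c > (0 : ℝ), ∃ N : ℕ, ∀ n ≥ N, ∀ t : ℕ, (n : ℝ) ^ 3 / 2 ≤ t →
      ENNReal.ofReal (Real.exp (-c * t / (n : ℝ) ^ 2)) ≤
        μ {ω | X t ω = 1 ∧ ∀ s : ℕ, 1 ≤ s → s ≤ t →
          1 ≤ X s ω ∧ X s ω ≤ (n : ℤ)} := by
  classical
  refine ⟨20, by norm_num, 10, ?_⟩
  intro n hn t ht
  have hn10 : (10:ℝ) ≤ (n:ℝ) := by exact_mod_cast hn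
  have hnpos : (0:ℝ) < n := by linarith
  have hnz : (1:ℤ) ≤ (n:ℤ) := by exact_mod_cast Nat.one_le_iff_ne_zero.2 (by omega)
  -- the sets and masses
  set D : ℕ → ℤ → Set Ω := fun s j =>
    {ω | X s ω = j ∧ ∀ r : ℕ, 1 ≤ r → r ≤ s → 1 ≤ X r ω ∧ X r ω ≤ (n:ℤ)} with hD
  set m : ℕ → ℤ → ℝ := fun s j => (μ (D s j)).toReal with hm
  have hXmeas : ∀ s, Measurable (X s) := by
    intro s
    have hfe : X s = fun ω => 1 + ∑ i ∈ range s, ξ i ω := funext (hX s)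
    rw [hfe]
    exact measurable_const.add (Finset.measurable_sum _ (fun i _ => hmeas i))
  have hDmeas : ∀ s j, MeasurableSet (D s j) := by
    intro s j
    have : D s j = (X s ⁻¹' {j}) ∩
        ⋂ (r : ℕ), ⋂ (_ : 1 ≤ r), ⋂ (_ : r ≤ s), (X r ⁻¹' Set.Icc 1 (n:ℤ)) := by
      ext ω
      simp [hD, Set.mem_iInter, Set.mem_preimage, Set.mem_Icc, and_assoc]
    rw [this]
    exact ((hXmeas s) (measurableSet_singleton j)).inter
      (MeasurableSet.iInter fun r => MeasurableSet.iInter fun _ =>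
        MeasurableSet.iInter fun _ => (hXmeas r) measurableSet_Icc)
  have hTop : ∀ s j, μ (D s j) ≠ ⊤ := fun s j => measure_ne_top μ _
  have hmnn : ∀ s j, 0 ≤ m s j := fun s j => ENNReal.toReal_nonneg
  have hDsat : ∀ s j ω ω', (∀ i < s, ξ i ω = ξ i ω') → ω ∈ D s j → ω' ∈ D s j := by
    intro s j ω ω' hξ hω
    have hXeq : ∀ r ≤ s, X r ω' = X r ω := by
      intro r hr
      rw [hX, hX]
      congr 1
      exact Finset.sum_congr rfl fun i hi => (hξ i (lt_of_lt_of_le (mem_range.1 hi) hr)).symm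
    obtain ⟨h1, h2⟩ := hω
    exact ⟨(hXeq s le_rfl).trans h1, fun r hr1 hr2 => (hXeq r hr2) ▸ h2 r hr1 hr2⟩
  have hprob : ∀ (s : ℕ) (e : ℤ), e ∈ ({-1,0,1} : Set ℤ) → μ (ξ s ⁻¹' {e}) = 1/3 := by
    intro s e he
    have : ξ s ⁻¹' {e} = {ω | ξ s ω = e} := rfl
    rw [this, hunif s e he]
  have hzero : ∀ (s : ℕ) (k : ℤ), (k < 1 ∨ (n:ℤ) < k) → m s k = 0 := by
    intro s k hk
    have : D s k = ∅ := by
      rw [Set.eq_empty_iff_forall_notMem]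
      rintro ω ⟨h1, h2⟩
      match s with
      | 0 =>
        rw [hX 0 ω] at h1
        simp at h1
        omega
      | (s'+1) =>
        have := h2 (s'+1) (by omega) le_rfl
        omega
    simp [hm, this]
  have hm01 : m 0 1 = 1 := by
    have : D 0 1 = Set.univ := by
      rw [Set.eq_univ_iff_forall]
      intro ω
      refine ⟨?_, fun r hr1 hr2 => by omega⟩
      rw [hX 0 ω]; simp
    simp [hm, this]
  have hm0j : ∀ j : ℤ, j ≠ 1 → m 0 j = 0 := by
    intro j hj
    have : D 0 j = ∅ := by
      rw [Set.eq_empty_iff_forall_notMem]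
      rintro ω ⟨h1, h2⟩
      rw [hX 0 ω] at h1; simp at h1; exact hj h1.symm
    simp [hm, this]
  -- the measure recursion
  have hrec0 : ∀ (s : ℕ) (j : ℤ), 1 ≤ j → j ≤ (n:ℤ) →
      m s (j-1) + m s j + m s (j+1) ≤ 3 * m (s+1) j := by
    intro s j hj1 hjn
    set A₁ : Set Ω := D s (j+1) ∩ ξ s ⁻¹' {-1} with hA₁
    set A₂ : Set Ω := D s j ∩ ξ s ⁻¹' {0} with hA₂
    set A₃ : Set Ω := D s (j-1) ∩ ξ s ⁻¹' {1} with hA₃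
    have hXsucc : ∀ ω, X (s+1) ω = X s ω + ξ s ω := by
      intro ω; rw [hX, hX, Finset.sum_range_succ]; ring
    have hsub : ∀ (e k : ℤ), k + e = j → D s k ∩ ξ s ⁻¹' {e} ⊆ D (s+1) j := by
      rintro e k hke ω ⟨⟨h1, h2⟩, h3⟩
      have hξe : ξ s ω = e := h3
      have hXj : X (s+1) ω = j := by rw [hXsucc, h1, hξe, hke]
      refine ⟨hXj, fun r hr1 hr2 => ?_⟩
      rcases Nat.lt_or_ge r (s+1) with hr | hr
      · exact h2 r hr1 (by omega)
      · have : r = s+1 := by omega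
        rw [this, hXj]; exact ⟨hj1, hjn⟩
    have hmeasA : ∀ (k e : ℤ), MeasurableSet (D s k ∩ ξ s ⁻¹' {e}) :=
      fun k e => (hDmeas s k).inter ((hmeas s) (measurableSet_singleton e))
    have hd12 : Disjoint A₁ A₂ := by
      rw [Set.disjoint_left]
      rintro ω ⟨_, h1⟩ ⟨_, h2⟩
      have e1 : ξ s ω = -1 := h1
      have e2 : ξ s ω = 0 := h2
      omega
    have hd123 : Disjoint (A₁ ∪ A₂) A₃ := by
      rw [Set.disjoint_left]
      rintro ω (⟨_, h1⟩ | ⟨_, h1⟩) ⟨_, h2⟩ <;>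
        · have e1 : ξ s ω = 1 := h2
          first
          | (have e2 : ξ s ω = -1 := h1; omega)
          | (have e2 : ξ s ω = 0 := h1; omega)
    have hμsum : μ (A₁ ∪ A₂ ∪ A₃) = μ A₁ + μ A₂ + μ A₃ := by
      rw [measure_union hd123 (hmeasA _ _), measure_union hd12 (hmeasA _ _)]
    have hAe : ∀ (k e : ℤ), e ∈ ({-1,0,1} : Set ℤ) →
        μ (D s k ∩ ξ s ⁻¹' {e}) = μ (D s k) * (1/3) := by
      intro k e he
      rw [indep_aux μ ξ hmeas hindep s e (D s k) (hDsat s k), hprob s e he]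
    have hunion : μ (A₁ ∪ A₂ ∪ A₃) ≤ μ (D (s+1) j) := by
      apply measure_mono
      refine Set.union_subset (Set.union_subset ?_ ?_) ?_
      · exact hsub (-1) (j+1) (by ring)
      · exact hsub 0 j (by ring)
      · exact hsub 1 (j-1) (by ring)
    have hμ1 : μ A₁ = μ (D s (j+1)) * (1/3) := hAe (j+1) (-1) (by simp)
    have hμ2 : μ A₂ = μ (D s j) * (1/3) := hAe j 0 (by simp)
    have hμ3 : μ A₃ = μ (D s (j-1)) * (1/3) := hAe (j-1) 1 (by simp)
    have key : μ (D s (j+1)) * (1/3) + μ (D s j) * (1/3) + μ (D s (j-1)) * (1/3)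
        ≤ μ (D (s+1) j) := by
      rw [← hμ1, ← hμ2, ← hμ3, ← hμsum]; exact hunion
    have h3 : ((1:ENNReal)/3) ≠ ⊤ := by norm_num
    have hfin : ∀ k : ℤ, μ (D s k) * (1/3) ≠ ⊤ := fun k => ENNReal.mul_ne_top (hTop s k) h3
    have := ENNReal.toReal_mono (hTop (s+1) j) key
    rw [ENNReal.toReal_add (by finiteness) (hfin _), ENNReal.toReal_add (hfin _) (hfin _)] at this
    simp only [ENNReal.toReal_mul] at this
    have h13 : ((1:ENNReal)/3).toReal = 1/3 := by norm_num
    rw [h13] at this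
    simp only [hm]
    linarith
  -- the sine test vector
  set θ : ℝ := Real.pi / ((n:ℝ)+1) with hθ
  have hθpos : 0 < θ := by positivity
  have hθle1 : θ ≤ 1 := by
    rw [hθ, div_le_one (by positivity)]
    linarith [Real.pi_lt_four]
  set v : ℤ → ℝ := fun k => Real.sin ((k:ℝ) * θ) with hv
  have hvnn : ∀ k : ℤ, 0 ≤ k → k ≤ (n:ℤ)+1 → 0 ≤ v k := by
    intro k hk0 hkn
    apply Real.sin_nonneg_of_nonneg_of_le_pi
    · have : (0:ℝ) ≤ (k:ℝ) := by exact_mod_cast hk0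
      positivity
    · have hk : (k:ℝ) ≤ (n:ℝ)+1 := by exact_mod_cast hkn
      calc (k:ℝ) * θ ≤ ((n:ℝ)+1) * θ := by
            apply mul_le_mul_of_nonneg_right hk hθpos.le
        _ = Real.pi := by rw [hθ]; field_simp
  have hv1 : ∀ k : ℤ, v k ≤ 1 := fun k => Real.sin_le_one _
  have hvb0 : v 0 = 0 := by simp [hv]
  have hvbn : v ((n:ℤ)+1) = 0 := by
    have : (((n:ℤ)+1 : ℤ):ℝ) * θ = Real.pi := by push_cast; rw [hθ]; field_simp
    rw [hv]; simp only [this, Real.sin_pi]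
  set lam : ℝ := 1 + 2 * Real.cos θ with hlam
  have hvrec : ∀ k : ℤ, v (k-1) + v k + v (k+1) = lam * v k := by
    intro k
    simp only [hv, hlam]
    push_cast
    rw [sub_mul, add_mul, one_mul, Real.sin_sub, Real.sin_add]
    ring
  set φ : ℕ → ℝ := fun s => ∑ j ∈ Finset.Icc (1:ℤ) (n:ℤ), v j * m s j with hφ
  -- reindexing lemmas
  have hre1 : ∀ s : ℕ, ∑ j ∈ Finset.Icc (1:ℤ) (n:ℤ), v j * m s (j+1)
      = ∑ k ∈ Finset.Icc (1:ℤ) (n:ℤ), v (k-1) * m s k := by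
    intro s
    have h1 : ∑ j ∈ Finset.Icc (1:ℤ) (n:ℤ), v j * m s (j+1)
        = ∑ k ∈ Finset.Icc (2:ℤ) ((n:ℤ)+1), v (k-1) * m s k := by
      rw [show ((2:ℤ)) = 1 + 1 by ring, show ((n:ℤ)+1) = (n:ℤ) + 1 by ring,
        ← Finset.map_add_right_Icc, Finset.sum_map]
      simp [addRightEmbedding]
    rw [h1]
    have h2 : ∑ k ∈ Finset.Icc (2:ℤ) (n:ℤ), v (k-1) * m s k
        = ∑ k ∈ Finset.Icc (2:ℤ) ((n:ℤ)+1), v (k-1) * m s k := by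
      apply Finset.sum_subset (Finset.Icc_subset_Icc_right (by linarith))
      intro k hk hk'
      simp only [Finset.mem_Icc] at hk hk'
      rw [hzero s k (by omega)]; ring
    have h3 : ∑ k ∈ Finset.Icc (2:ℤ) (n:ℤ), v (k-1) * m s k
        = ∑ k ∈ Finset.Icc (1:ℤ) (n:ℤ), v (k-1) * m s k := by
      apply Finset.sum_subset (Finset.Icc_subset_Icc_left (by norm_num))
      intro k hk hk'
      simp only [Finset.mem_Icc] at hk hk'
      have : k = 1 := by omega
      rw [this]; norm_num [hvb0]
    rw [← h2, h3]
  have hre2 : ∀ s : ℕ, ∑ j ∈ Finset.Icc (1:ℤ) (n:ℤ), v j * m s (j-1)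
      = ∑ k ∈ Finset.Icc (1:ℤ) (n:ℤ), v (k+1) * m s k := by
    intro s
    have h1 : ∑ j ∈ Finset.Icc (1:ℤ) (n:ℤ), v j * m s (j-1)
        = ∑ k ∈ Finset.Icc (0:ℤ) ((n:ℤ)-1), v (k+1) * m s k := by
      rw [show ((0:ℤ)) = 1 + (-1) by ring, show ((n:ℤ)-1) = (n:ℤ) + (-1) by ring,
        ← Finset.map_add_right_Icc, Finset.sum_map]
      apply Finset.sum_congr rfl
      intro j hj
      simp [addRightEmbedding, sub_eq_add_neg]
    rw [h1]
    have h2 : ∑ k ∈ Finset.Icc (1:ℤ) ((n:ℤ)-1), v (k+1) * m s k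
        = ∑ k ∈ Finset.Icc (0:ℤ) ((n:ℤ)-1), v (k+1) * m s k := by
      apply Finset.sum_subset (Finset.Icc_subset_Icc_left (by norm_num))
      intro k hk hk'
      simp only [Finset.mem_Icc] at hk hk'
      rw [hzero s k (by omega)]; ring
    have h3 : ∑ k ∈ Finset.Icc (1:ℤ) ((n:ℤ)-1), v (k+1) * m s k
        = ∑ k ∈ Finset.Icc (1:ℤ) (n:ℤ), v (k+1) * m s k := by
      apply Finset.sum_subset (Finset.Icc_subset_Icc_right (by linarith))
      intro k hk hk'
      simp only [Finset.mem_Icc] at hk hk'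
      have : k = (n:ℤ) := by omega
      rw [this, show ((n:ℤ)+1) = (n:ℤ)+1 from rfl, hvbn]; ring
    rw [← h2, h3]
  -- spectral recursion for φ
  have hφrec : ∀ s : ℕ, lam * φ s ≤ 3 * φ (s+1) := by
    intro s
    have step1 : lam * φ s
        = ∑ j ∈ Finset.Icc (1:ℤ) (n:ℤ), (v (j-1) + v j + v (j+1)) * m s j := by
      rw [hφ, Finset.mul_sum]
      apply Finset.sum_congr rfl
      intro j _
      rw [hvrec j]; ring
    have step2 : ∑ j ∈ Finset.Icc (1:ℤ) (n:ℤ), (v (j-1) + v j + v (j+1)) * m s j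
        = ∑ j ∈ Finset.Icc (1:ℤ) (n:ℤ), v j * (m s (j-1) + m s j + m s (j+1)) := by
      have e1 : ∑ j ∈ Finset.Icc (1:ℤ) (n:ℤ), (v (j-1) + v j + v (j+1)) * m s j
          = (∑ j ∈ Finset.Icc (1:ℤ) (n:ℤ), v (j-1) * m s j)
            + (∑ j ∈ Finset.Icc (1:ℤ) (n:ℤ), v j * m s j)
            + (∑ j ∈ Finset.Icc (1:ℤ) (n:ℤ), v (j+1) * m s j) := by
        rw [← Finset.sum_add_distrib, ← Finset.sum_add_distrib]
        apply Finset.sum_congr rfl; intro j _; ring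
      have e2 : ∑ j ∈ Finset.Icc (1:ℤ) (n:ℤ), v j * (m s (j-1) + m s j + m s (j+1))
          = (∑ j ∈ Finset.Icc (1:ℤ) (n:ℤ), v j * m s (j-1))
            + (∑ j ∈ Finset.Icc (1:ℤ) (n:ℤ), v j * m s j)
            + (∑ j ∈ Finset.Icc (1:ℤ) (n:ℤ), v j * m s (j+1)) := by
        rw [← Finset.sum_add_distrib, ← Finset.sum_add_distrib]
        apply Finset.sum_congr rfl; intro j _; ring
      rw [e1, e2, hre1 s, hre2 s]
      ring
    rw [step1, step2, hφ, Finset.mul_sum]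
    apply Finset.sum_le_sum
    intro j hj
    simp only [Finset.mem_Icc] at hj
    have hvj : 0 ≤ v j := hvnn j (by omega) (by omega)
    calc v j * (m s (j-1) + m s j + m s (j+1))
        ≤ v j * (3 * m (s+1) j) :=
          mul_le_mul_of_nonneg_left (hrec0 s j hj.1 hj.2) hvj
      _ = 3 * (v j * m (s+1) j) := by ring
  -- lam bounds
  have hcos : 1 - θ^2/2 ≤ Real.cos θ := Real.one_sub_sq_div_two_le_cos
  have hlamlb : 3 - θ^2 ≤ lam := by rw [hlam]; nlinarith
  have hlam0 : 0 ≤ lam := by nlinarith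
  have hlam3 : lam ≤ 3 := by
    rw [hlam]; have := Real.cos_le_one θ; linarith
  have hsinnn : 0 ≤ Real.sin θ := by
    apply Real.sin_nonneg_of_nonneg_of_le_pi hθpos.le
    linarith [Real.pi_gt_three]
  have hφ0 : φ 0 = Real.sin θ := by
    show ∑ j ∈ Finset.Icc (1:ℤ) (n:ℤ), v j * m 0 j = Real.sin θ
    rw [Finset.sum_eq_single 1]
    · rw [hm01]; simp [hv]
    · intro j _ hj; rw [hm0j j hj]; ring
    · intro h
      exfalso; apply h; simp only [Finset.mem_Icc]; omega
  have hφlb : ∀ s : ℕ, (lam/3)^s * Real.sin θ ≤ φ s := by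
    intro s
    induction s with
    | zero => rw [hφ0]; simp
    | succ s ih =>
      have h1 : (lam/3)^(s+1) * Real.sin θ = (lam/3) * ((lam/3)^s * Real.sin θ) := by ring
      rw [h1]
      calc (lam/3) * ((lam/3)^s * Real.sin θ) ≤ (lam/3) * φ s :=
            mul_le_mul_of_nonneg_left ih (by positivity)
        _ ≤ φ (s+1) := by
            rw [div_mul_eq_mul_div, div_le_iff₀ (by norm_num : (0:ℝ) < 3)]
            linarith [hφrec s]
  -- moving mass to site 1
  have hchain : ∀ (r : ℕ), ∀ (s : ℕ) (j : ℤ), 1 ≤ j → j ≤ (n:ℤ) → j ≤ (r:ℤ) + 1 →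
      (1/3:ℝ)^r * m s j ≤ m (s + r) 1 := by
    intro r
    induction r with
    | zero =>
      intro s j hj1 hjn hjr
      have : j = 1 := by omega
      subst this
      simp
    | succ r ih =>
      intro s j hj1 hjn hjr
      set j' : ℤ := max (j-1) 1 with hj'
      have h1j' : 1 ≤ j' := le_max_right _ _
      have hj'n : j' ≤ (n:ℤ) := by
        apply max_le (by omega) hnz
      have hmem : m s j ≤ m s (j'-1) + m s j' + m s (j'+1) := by
        rcases eq_or_lt_of_le hj1 with h | h
        · have : j' = 1 := by omega
          have hjj : j = j' := by omega
          rw [← hjj]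
          linarith [hmnn s (j-1), hmnn s (j+1), hmnn s (j'-1), hmnn s (j'+1)]
        · have : j' = j - 1 := by omega
          have hjj : j = j' + 1 := by omega
          rw [← hjj] at *
          linarith [hmnn s (j-1), hmnn s (j-2), hmnn s j, hmnn s (j'-1), hmnn s j']
      have hstep : (1/3:ℝ) * m s j ≤ m (s+1) j' := by
        have := hrec0 s j' h1j' hj'n
        linarith [hmem]
      have hj'r : j' ≤ (r:ℤ) + 1 := by
        apply max_le ?_ (by omega)
        push_cast at hjr ⊢
        omega
      calc (1/3:ℝ)^(r+1) * m s j = (1/3:ℝ)^r * ((1/3:ℝ) * m s j) := by ring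
        _ ≤ (1/3:ℝ)^r * m (s+1) j' :=
            mul_le_mul_of_nonneg_left hstep (by positivity)
        _ ≤ m ((s+1) + r) 1 := ih (s+1) j' h1j' hj'n hj'r
        _ = m (s + (r+1)) 1 := by rw [Nat.add_assoc, Nat.add_comm 1 r]
  -- extracting the max site
  have hmax : ∀ s : ℕ, ∃ j : ℤ, 1 ≤ j ∧ j ≤ (n:ℤ) ∧ φ s ≤ (n:ℝ) * m s j := by
    intro s
    have hne : (Finset.Icc (1:ℤ) (n:ℤ)).Nonempty := ⟨1, by simp [hnz]⟩
    obtain ⟨j, hjmem, hjmax⟩ := Finset.exists_max_image (Finset.Icc (1:ℤ) (n:ℤ)) (m s) hne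
    simp only [Finset.mem_Icc] at hjmem
    refine ⟨j, hjmem.1, hjmem.2, ?_⟩
    have hb : ∀ k ∈ Finset.Icc (1:ℤ) (n:ℤ), v k * m s k ≤ m s j := by
      intro k hk
      have hk' := hk
      simp only [Finset.mem_Icc] at hk'
      calc v k * m s k ≤ 1 * m s k :=
            mul_le_mul_of_nonneg_right (hv1 k) (hmnn s k)
        _ = m s k := one_mul _
        _ ≤ m s j := hjmax k hk
    calc φ s ≤ ∑ _k ∈ Finset.Icc (1:ℤ) (n:ℤ), m s j := Finset.sum_le_sum hb
      _ = (Finset.Icc (1:ℤ) (n:ℤ)).card • m s j := (Finset.sum_const _)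
      _ = (n:ℝ) * m s j := by
          rw [Int.card_Icc]
          simp [nsmul_eq_mul]
  -- assemble the main lower bound on m t 1
  have h2nt : 2*n ≤ t := by
    have h1 : ((2*n : ℕ):ℝ) ≤ (t:ℝ) := by
      push_cast
      have hsq : (100:ℝ) ≤ (n:ℝ)^2 := by nlinarith [hn10]
      nlinarith [ht, hn10, hnpos, hsq]
    exact_mod_cast h1
  obtain ⟨j, hj1, hjn, hjφ⟩ := hmax (t - 2*n)
  have hmjφ : φ (t - 2*n) / (n:ℝ) ≤ m (t - 2*n) j := by
    rw [div_le_iff₀ hnpos]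
    linarith [hjφ]
  have hchain' : (1/3:ℝ)^(2*n) * m (t - 2*n) j ≤ m t 1 := by
    have := hchain (2*n) (t - 2*n) j hj1 hjn (by push_cast; omega)
    rwa [Nat.sub_add_cancel h2nt] at this
  have hpowmono : (lam/3)^t ≤ (lam/3)^(t - 2*n) := by
    apply pow_le_pow_of_le_one (by positivity) (by linarith [hlam3]) (by omega)
  have hmt1 : (1/3:ℝ)^(2*n) * ((lam/3)^t * Real.sin θ / (n:ℝ)) ≤ m t 1 := by
    have hs1 : (lam/3)^t * Real.sin θ ≤ (lam/3)^(t - 2*n) * Real.sin θ :=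
      mul_le_mul_of_nonneg_right hpowmono hsinnn
    have hs2 : (lam/3)^t * Real.sin θ / (n:ℝ) ≤ φ (t - 2*n) / (n:ℝ) := by
      gcongr
      exact le_trans hs1 (hφlb (t - 2*n))
    calc (1/3:ℝ)^(2*n) * ((lam/3)^t * Real.sin θ / (n:ℝ))
        ≤ (1/3:ℝ)^(2*n) * m (t - 2*n) j := by
          apply mul_le_mul_of_nonneg_left ?_ (by positivity)
          exact le_trans hs2 (le_trans hmjφ le_rfl)
      _ ≤ m t 1 := hchain'
  have hfinal : Real.exp (-20*(t:ℝ)/(n:ℝ)^2) ≤ m t 1 := by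
    have hnum := numeric_aux n t hn10 ht
    rw [← hθ, ← hlam] at hnum
    exact le_trans hnum hmt1
  calc ENNReal.ofReal (Real.exp (-20 * (t:ℝ) / (n:ℝ)^2))
      ≤ ENNReal.ofReal (m t 1) := ENNReal.ofReal_le_ofReal hfinal
    _ = μ (D t 1) := ENNReal.ofReal_toReal (hTop t 1)
    _ = μ {ω | X t ω = 1 ∧ ∀ s : ℕ, 1 ≤ s → s ≤ t →
          1 ≤ X s ω ∧ X s ω ≤ (n : ℤ)} := rfl
end

section
/- Let Y be a random variable with P(Y = 0) = α and P(Y = i) = p_i for i ≥ 1 where p_i ≤ C(2/α - 2)^i i^{-3/2}, and given Y = i ≥ 1 let I be the number of internal vertices of a free triangulation of an (i+1)-gon with parameter αβ (with I = 1 when Y = 0 by convention I_1 = 1). If α ∈ (2/3, 1) and β = α(1-α)/2, then there exists λ > 0 such that E[exp(λ(Y + I))] < ∞. -/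
set_option maxHeartbeats 1000000
open MeasureTheory

section Aux

lemma triStepA (n t : ℕ) (h : 3*n ≤ t) : 2 * Nat.choose (t+1) n ≤ 3 * Nat.choose t n := by
  cases n with
  | zero => simp
  | succ n' =>
    rw [Nat.choose_succ_succ t n']
    have key : 2 * Nat.choose t n' ≤ Nat.choose t (n'+1) := by
      have hid : Nat.choose t (n'+1) * (n'+1) = Nat.choose t n' * (t - n') :=
        Nat.choose_succ_right_eq t n'
      have h1 : 2 * Nat.choose t n' * (n'+1) ≤ Nat.choose t (n'+1) * (n'+1) := by
        rw [hid]
        have : 2 * (n'+1) ≤ t - n' := by omega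
        calc 2 * Nat.choose t n' * (n'+1) = Nat.choose t n' * (2*(n'+1)) := by ring
          _ ≤ Nat.choose t n' * (t - n') := Nat.mul_le_mul_left _ this
      exact Nat.le_of_mul_le_mul_right h1 (Nat.succ_pos n')
    simp only [Nat.succ_eq_add_one] at *
    omega

lemma triStepB (n k : ℕ) : 2^k * Nat.choose (3*n + k) n ≤ 3^k * Nat.choose (3*n) n := by
  induction k with
  | zero => simp
  | succ k ih =>
    have h1 : 2 * Nat.choose (3*n + k + 1) n ≤ 3 * Nat.choose (3*n + k) n :=
      triStepA n (3*n + k) (by omega)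
    calc 2^(k+1) * Nat.choose (3*n + (k+1)) n
        = 2^k * (2 * Nat.choose (3*n + k + 1) n) := by ring_nf
      _ ≤ 2^k * (3 * Nat.choose (3*n + k) n) := Nat.mul_le_mul_left _ h1
      _ = 3 * (2^k * Nat.choose (3*n + k) n) := by ring
      _ ≤ 3 * (3^k * Nat.choose (3*n) n) := Nat.mul_le_mul_left _ ih
      _ = 3^(k+1) * Nat.choose (3*n) n := by ring

lemma triStepC (n : ℕ) : 4^n * Nat.choose (3*n) n ≤ 27^n := by
  have hsym : Nat.choose (3*n) (2*n) = Nat.choose (3*n) n := by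
    have h2 : (3*n) - n = 2*n := by omega
    rw [← h2, Nat.choose_symm (by omega)]
  have hbin := add_pow 2 1 (3*n)
  simp only [one_pow, mul_one, Nat.cast_id] at hbin
  norm_num at hbin
  have hterm : 2^(2*n) * Nat.choose (3*n) (2*n) ≤ 3^(3*n) := by
    rw [hbin]
    exact Finset.single_le_sum (f := fun k => 2^k * Nat.choose (3*n) k)
      (fun _ _ => Nat.zero_le _) (by simp; omega)
  rw [hsym] at hterm
  calc 4^n * Nat.choose (3*n) n = 2^(2*n) * Nat.choose (3*n) n := by
        rw [pow_mul]; norm_num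
    _ ≤ 3^(3*n) := hterm
    _ = 27^n := by rw [pow_mul]; norm_num

lemma triStepD (M : ℕ) : Nat.choose (2*M) M ≤ 4^M := by
  calc Nat.choose (2*M) M ≤ ∑ k ∈ Finset.range (2*M+1), Nat.choose (2*M) k :=
        Finset.single_le_sum (fun _ _ => Nat.zero_le _) (by simp; omega)
    _ = 2^(2*M) := Nat.sum_range_choose (2*M)
    _ = 4^M := by rw [pow_mul]; norm_num

lemma triStepE (M n : ℕ) :
    2^(2*n+1) * Nat.factorial (2*M+1) * Nat.factorial (2*M+3*n) ≤
      27^(M+n+2) * (Nat.factorial M)^2 * Nat.factorial n * Nat.factorial (2*M+2*n+2) := by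
  refine Nat.le_of_mul_le_mul_left ?_ (show 0 < 4^(M+n) by positivity)
  have hfac : Nat.choose (2*M+3*n) n * Nat.factorial n * Nat.factorial (2*M+2*n)
      = Nat.factorial (2*M+3*n) := by
    have h := Nat.choose_mul_factorial_mul_factorial (n := 2*M+3*n) (k := n) (by omega)
    have h2 : 2*M+3*n - n = 2*M+2*n := by omega
    rwa [h2] at h
  have hBC : 4^(M+n) * Nat.choose (2*M+3*n) n ≤ 9^M * 27^n := by
    have hB : 4^M * Nat.choose (2*M+3*n) n ≤ 9^M * Nat.choose (3*n) n := by
      have := triStepB n (2*M)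
      have e1 : 3*n + 2*M = 2*M + 3*n := by omega
      rw [e1, pow_mul, pow_mul] at this
      norm_num at this ⊢
      exact this
    calc 4^(M+n) * Nat.choose (2*M+3*n) n
        = 4^n * (4^M * Nat.choose (2*M+3*n) n) := by rw [pow_add]; ring
      _ ≤ 4^n * (9^M * Nat.choose (3*n) n) := Nat.mul_le_mul_left _ hB
      _ = 9^M * (4^n * Nat.choose (3*n) n) := by ring
      _ ≤ 9^M * 27^n := Nat.mul_le_mul_left _ (triStepC n)
  have hD : Nat.factorial (2*M) ≤ 4^M * (Nat.factorial M)^2 := by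
    have h := Nat.choose_mul_factorial_mul_factorial (n := 2*M) (k := M) (by omega)
    have h2 : 2*M - M = M := by omega
    rw [h2] at h
    calc Nat.factorial (2*M) = Nat.choose (2*M) M * Nat.factorial M * Nat.factorial M := h.symm
      _ ≤ 4^M * Nat.factorial M * Nat.factorial M :=
          Nat.mul_le_mul_right _ (Nat.mul_le_mul_right _ (triStepD M))
      _ = 4^M * (Nat.factorial M)^2 := by ring
  have hmono : Nat.factorial (2*M+2*n) ≤ Nat.factorial (2*M+2*n+2) :=
    Nat.factorial_le (by omega)
  have hsucc : Nat.factorial (2*M+1) = (2*M+1) * Nat.factorial (2*M) := rfl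
  have hnum : 2 * (2*M+1) * 36^M ≤ 729 * 108^M := by
    have h3 : M + 1 ≤ 3^M := Nat.lt_pow_self (n := M) (a := 3) (by norm_num)
    have e108 : (108:ℕ)^M = 36^M * 3^M := by rw [← Nat.mul_pow]
    calc 2*(2*M+1) * 36^M ≤ 729 * (3^M * 36^M) := by
          have h1 : 2*(2*M+1) ≤ 729 * 3^M := by nlinarith
          calc 2*(2*M+1)*36^M ≤ (729 * 3^M) * 36^M := Nat.mul_le_mul_right _ h1
            _ = 729 * (3^M * 36^M) := by ring
      _ = 729 * 108^M := by rw [e108]; ring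
  calc 4^(M+n) * (2^(2*n+1) * Nat.factorial (2*M+1) * Nat.factorial (2*M+3*n))
      = 2^(2*n+1) * Nat.factorial (2*M+1) * Nat.factorial n * Nat.factorial (2*M+2*n) *
          (4^(M+n) * Nat.choose (2*M+3*n) n) := by rw [← hfac]; ring
    _ ≤ 2^(2*n+1) * Nat.factorial (2*M+1) * Nat.factorial n * Nat.factorial (2*M+2*n) *
          (9^M * 27^n) := Nat.mul_le_mul_left _ hBC
    _ = 2^(2*n+1) * 9^M * 27^n * (2*M+1) * Nat.factorial n * Nat.factorial (2*M+2*n) *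
          Nat.factorial (2*M) := by rw [hsucc]; ring
    _ ≤ 2^(2*n+1) * 9^M * 27^n * (2*M+1) * Nat.factorial n * Nat.factorial (2*M+2*n+2) *
          (4^M * (Nat.factorial M)^2) := by
        apply Nat.mul_le_mul
        apply Nat.mul_le_mul_left _ hmono
        exact hD
    _ = (2*(2*M+1)*36^M) * (2^(2*n) * 27^n * (Nat.factorial M)^2 * Nat.factorial n *
          Nat.factorial (2*M+2*n+2)) := by
        have e36 : (36:ℕ)^M = 9^M * 4^M := by rw [← Nat.mul_pow]
        rw [e36, pow_succ]
        ring
    _ ≤ (729 * 108^M) * (2^(2*n) * 27^n * (Nat.factorial M)^2 * Nat.factorial n *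
          Nat.factorial (2*M+2*n+2)) := Nat.mul_le_mul_right _ hnum
    _ = 4^(M+n) * (27^(M+n+2) * (Nat.factorial M)^2 * Nat.factorial n *
          Nat.factorial (2*M+2*n+2)) := by
        have e108 : (108:ℕ)^M = 4^M * 27^M := by rw [← Nat.mul_pow]
        have e4 : (2:ℕ)^(2*n) = 4^n := by rw [pow_mul]; norm_num
        rw [e108, e4, pow_add 4 M n, pow_add 27 (M+n) 2, pow_add 27 M n]
        ring

lemma triStepF (M : ℕ) : (Nat.factorial M)^2 * Nat.factorial (2*M+2) ≤
    2 * Nat.factorial (2*M+1) * Nat.factorial (2*M) := by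
  have h : Nat.factorial (2*M+2) = (2*M+2) * Nat.factorial (2*M+1) := rfl
  have key : (Nat.factorial M)^2 * (M+1) ≤ Nat.factorial (2*M) := by
    have hd := Nat.choose_mul_factorial_mul_factorial (n := 2*M) (k := M) (by omega)
    have h2 : 2*M - M = M := by omega
    rw [h2] at hd
    have hch : M + 1 ≤ Nat.choose (2*M) M := by
      cases M with
      | zero => simp
      | succ m =>
        have h1 : Nat.choose (2*(m+1)) 1 ≤ Nat.choose (2*(m+1)) (2*(m+1)/2) :=
          Nat.choose_le_middle 1 (2*(m+1))
        have h2' : 2*(m+1)/2 = m+1 := by omega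
        rw [h2', Nat.choose_one_right] at h1
        omega
    calc (Nat.factorial M)^2 * (M+1) ≤ (Nat.factorial M)^2 * Nat.choose (2*M) M :=
          Nat.mul_le_mul_left _ hch
      _ = Nat.choose (2*M) M * Nat.factorial M * Nat.factorial M := by ring
      _ = Nat.factorial (2*M) := hd
  calc (Nat.factorial M)^2 * Nat.factorial (2*M+2)
      = ((Nat.factorial M)^2 * (M+1)) * (2 * Nat.factorial (2*M+1)) := by rw [h]; ring
    _ ≤ Nat.factorial (2*M) * (2 * Nat.factorial (2*M+1)) :=
        Nat.mul_le_mul_right _ key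
    _ = 2 * Nat.factorial (2*M+1) * Nat.factorial (2*M) := by ring

end Aux

/-- `phiTri n m` is the number of rooted triangulations of an `m`-gon with `n`
internal vertices (type II), via the classical enumeration formula; `0` for `m < 2`. -/
noncomputable def phiTri (n m : ℕ) : ℝ :=
  if m < 2 then 0 else
    (2 : ℝ) ^ (n + 1) * (Nat.factorial (2 * (m - 2) + 1)) *
        (Nat.factorial (2 * (m - 2) + 3 * n)) /
      ((Nat.factorial (m - 2) : ℝ) ^ 2 * (Nat.factorial n) *
        (Nat.factorial (2 * (m - 2) + 2 * n + 2)))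

/-- Partition function of free triangulations of the `m`-gon with parameter `q`. -/
noncomputable def Zgon (m : ℕ) (q : ℝ) : ℝ := ∑' n, phiTri n m * q ^ n

section Aux2

lemma phiTri_nonneg (n m : ℕ) : 0 ≤ phiTri n m := by
  unfold phiTri
  split
  · exact le_rfl
  · positivity

lemma phiTri_le (n m : ℕ) : phiTri n m ≤ 27^m * (27/2)^n := by
  unfold phiTri
  split
  · positivity
  · rename_i h
    obtain ⟨M, rfl⟩ : ∃ M, m = M + 2 := ⟨m - 2, by omega⟩
    simp only [Nat.add_sub_cancel]
    have f1 : (0:ℝ) < (Nat.factorial M : ℝ) := by exact_mod_cast M.factorial_pos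
    have f2 : (0:ℝ) < (Nat.factorial n : ℝ) := by exact_mod_cast n.factorial_pos
    have f3 : (0:ℝ) < (Nat.factorial (2*M+2*n+2) : ℝ) := by
      exact_mod_cast (2*M+2*n+2).factorial_pos
    rw [div_le_iff₀ (by positivity)]
    have key : (2:ℝ)^(2*n+1) * ((2*M+1).factorial : ℝ) * ((2*M+3*n).factorial : ℝ) ≤
        27^(M+n+2) * ((M.factorial : ℝ))^2 * (n.factorial : ℝ) *
          ((2*M+2*n+2).factorial : ℝ) := by
      exact_mod_cast triStepE M n
    have h2n : (0:ℝ) < 2^n := by positivity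
    rw [show (27:ℝ)^(M+2) * (27/2)^n * ((Nat.factorial M : ℝ)^2 * (Nat.factorial n) *
        (Nat.factorial (2*M+2*n+2))) = (27^(M+n+2) * (Nat.factorial M : ℝ)^2 *
        (Nat.factorial n) * (Nat.factorial (2*M+2*n+2))) / 2^n from by
      rw [div_pow, pow_add 27 (M+n) 2, pow_add 27 M n]; ring]
    rw [le_div_iff₀ h2n]
    calc (2:ℝ)^(n+1) * ((2*M+1).factorial : ℝ) * ((2*M+3*n).factorial : ℝ) * 2^n
        = 2^(2*n+1) * ((2*M+1).factorial : ℝ) * ((2*M+3*n).factorial : ℝ) := by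
          rw [show 2*n+1 = (n+1)+n from by omega, pow_add]; ring
      _ ≤ _ := key

lemma summable_phiTri (m : ℕ) {q : ℝ} (hq : 0 ≤ q) (hq2 : 27*q < 2) :
    Summable (fun n => phiTri n m * q ^ n) := by
  refine Summable.of_nonneg_of_le (f := fun n => 27^m * (27*q/2)^n)
    (fun n => mul_nonneg (phiTri_nonneg n m) (pow_nonneg hq n)) (fun n => ?_) ?_
  · calc phiTri n m * q^n ≤ 27^m * (27/2)^n * q^n :=
          mul_le_mul_of_nonneg_right (phiTri_le n m) (by positivity)
      _ = 27^m * (27*q/2)^n := by rw [mul_assoc, ← mul_pow]; ring_nf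
  · apply Summable.mul_left
    exact summable_geometric_of_lt_one (by positivity) (by linarith)

lemma phiTri_zero_ge_one (m : ℕ) (hm : 2 ≤ m) : 1 ≤ phiTri 0 m := by
  unfold phiTri
  rw [if_neg (by omega)]
  obtain ⟨M, rfl⟩ : ∃ M, m = M + 2 := ⟨m - 2, by omega⟩
  simp only [Nat.add_sub_cancel, Nat.mul_zero, Nat.add_zero, Nat.factorial_zero]
  rw [le_div_iff₀ (by positivity)]
  have key : ((Nat.factorial M : ℝ))^2 * ((2*M+2).factorial : ℝ) ≤
      2 * ((2*M+1).factorial : ℝ) * ((2*M).factorial : ℝ) := by exact_mod_cast triStepF M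
  calc 1 * ((Nat.factorial M : ℝ)^2 * (Nat.cast 1) * ((2*M+0+2).factorial : ℝ))
      = (Nat.factorial M : ℝ)^2 * ((2*M+2).factorial : ℝ) := by norm_num
    _ ≤ 2 * ((2*M+1).factorial : ℝ) * ((2*M).factorial : ℝ) := key
    _ = (2:ℝ)^(0+1) * ((2*M+1).factorial : ℝ) * ((2*M+3*0).factorial : ℝ) := by norm_num

lemma Zgon_ge_one (m : ℕ) (hm : 2 ≤ m) {q : ℝ} (hq : 0 ≤ q) (hq2 : 27*q < 2) :
    1 ≤ Zgon m q := by
  have hsum := summable_phiTri m hq hq2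
  have h0 : 1 ≤ phiTri 0 m * q ^ 0 := by simpa using phiTri_zero_ge_one m hm
  calc (1:ℝ) ≤ phiTri 0 m * q ^ 0 := h0
    _ ≤ ∑' n, phiTri n m * q ^ n :=
        hsum.le_tsum 0 (fun j _ => mul_nonneg (phiTri_nonneg j m) (pow_nonneg hq j))

lemma lint_pair {Ω : Type*} [MeasurableSpace Ω] (μ : Measure Ω)
    (Y I : Ω → ℕ) (hY : Measurable Y) (hI : Measurable I) (H : ℕ → ℕ → ENNReal) :
    ∫⁻ ω, H (Y ω) (I ω) ∂μ = ∑' i, ∑' k, H i k * μ {ω | Y ω = i ∧ I ω = k} := by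
  have hT : Measurable (fun ω => (Y ω, I ω)) := hY.prodMk hI
  have h1 : ∫⁻ ω, H (Y ω) (I ω) ∂μ
      = ∫⁻ p : ℕ × ℕ, H p.1 p.2 ∂(μ.map (fun ω => (Y ω, I ω))) :=
    (lintegral_map (f := fun p : ℕ × ℕ => H p.1 p.2) (measurable_of_countable _) hT).symm
  rw [h1, lintegral_countable', ENNReal.tsum_prod']
  congr 1; ext i; congr 1; ext k
  congr 1
  rw [Measure.map_apply hT (measurableSet_singleton _)]
  congr 1
  ext ω
  simp [Prod.ext_iff]

lemma lint_single {Ω : Type*} [MeasurableSpace Ω] (μ : Measure Ω)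
    (Y : Ω → ℕ) (hY : Measurable Y) (H : ℕ → ENNReal) :
    ∫⁻ ω, H (Y ω) ∂μ = ∑' i, H i * μ {ω | Y ω = i} := by
  have h1 : ∫⁻ ω, H (Y ω) ∂μ = ∫⁻ i, H i ∂(μ.map Y) :=
    (lintegral_map (measurable_of_countable _) hY).symm
  rw [h1, lintegral_countable']
  congr 1; ext i
  congr 1
  rw [Measure.map_apply hY (measurableSet_singleton _)]
  rfl

lemma holder_aux {Ω : Type*} [MeasurableSpace Ω] (μ : Measure Ω)
    (F G : Ω → ENNReal) (hF : Measurable F) (hG : Measurable G)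
    (θ : ℝ) (h0 : 0 < θ) (h1 : θ < 1) :
    ∫⁻ ω, (F ω) ^ θ * (G ω) ^ (1-θ) ∂μ ≤
      (∫⁻ ω, F ω ∂μ) ^ θ * (∫⁻ ω, G ω ∂μ) ^ (1-θ) := by
  have hpq : Real.HolderConjugate (1/θ) (1/(1-θ)) :=
    Real.holderConjugate_one_div h0 (by linarith) (by ring)
  have hθ : θ ≠ 0 := ne_of_gt h0
  have hθ1 : (1:ℝ) - θ ≠ 0 := by linarith
  have this := ENNReal.lintegral_mul_le_Lp_mul_Lq μ hpq
    (f := fun ω => (F ω) ^ θ) (g := fun ω => (G ω) ^ (1-θ))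
    ((hF.pow_const θ).aemeasurable) ((hG.pow_const (1-θ)).aemeasurable)
  simp only [Pi.mul_apply] at this
  have heq1 : ∫⁻ ω, ((F ω) ^ θ) ^ (1/θ) ∂μ = ∫⁻ ω, F ω ∂μ := by
    apply lintegral_congr; intro ω
    rw [← ENNReal.rpow_mul, mul_one_div_cancel hθ, ENNReal.rpow_one]
  have heq2 : ∫⁻ ω, ((G ω) ^ (1-θ)) ^ (1/(1-θ)) ∂μ = ∫⁻ ω, G ω ∂μ := by
    apply lintegral_congr; intro ω
    rw [← ENNReal.rpow_mul, mul_one_div_cancel hθ1, ENNReal.rpow_one]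
  rw [heq1, heq2, one_div_one_div, one_div_one_div] at this
  exact this

end Aux2

/-- Let `Y` have `P(Y=0)=α` and `P(Y=i)=pᵢ ≤ C (2/α-2)^i i^{-3/2}` for `i ≥ 1`,
and given `Y=i ≥ 1` let `I` be the number of internal vertices of a free
triangulation of an `(i+1)`-gon with parameter `αβ` (with `I = 1` when `Y = 0`).
For `α ∈ (2/3,1)` and `β = α(1-α)/2`, there is `λ > 0` with
`E[exp(λ(Y+I))] < ∞`. -/
theorem exponential_tail_of_peeling_step {Ω : Type*} [MeasurableSpace Ω]
    (μ : Measure Ω) [IsProbabilityMeasure μ]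
    (α β C : ℝ) (hα₁ : 2 / 3 < α) (hα₂ : α < 1) (hC : 0 < C)
    (hβ : β = α * (1 - α) / 2)
    (Y I : Ω → ℕ) (hY : Measurable Y) (hI : Measurable I)
    (h0 : μ {ω | Y ω = 0} = ENNReal.ofReal α)
    (h0I : μ {ω | Y ω = 0 ∧ I ω = 1} = ENNReal.ofReal α)
    (htail : ∀ i : ℕ, 1 ≤ i →
      μ {ω | Y ω = i} ≤
        ENNReal.ofReal (C * (2 / α - 2) ^ i * ((i : ℝ)) ^ (-(3 : ℝ) / 2)))
    (hcond : ∀ i k : ℕ, 1 ≤ i →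
      μ {ω | Y ω = i ∧ I ω = k} =
        μ {ω | Y ω = i} *
          ENNReal.ofReal (phiTri k (i + 1) * (α * β) ^ k / Zgon (i + 1) (α * β))) :
    ∃ lam > (0 : ℝ),
      ∫⁻ ω, ENNReal.ofReal (Real.exp (lam * ((Y ω : ℝ) + (I ω : ℝ)))) ∂μ < ⊤ := by
  have hα0 : (0:ℝ) < α := by linarith
  set q : ℝ := α * β with hqdef
  have h1α : (0:ℝ) < 1 - α := by linarith
  have hq0 : 0 < q := by
    rw [hqdef, hβ]
    nlinarith [mul_pos (mul_pos hα0 hα0) h1α]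
  have hq2 : 27 * q < 2 := by
    have h32 : (0:ℝ) < 3*α - 2 := by linarith
    have h31 : (0:ℝ) < 3*α + 1 := by linarith
    have hcube : 0 < (3*α-2)^2 * (3*α+1) := by positivity
    rw [hqdef, hβ]; nlinarith [hcube]
  have hqnn : 0 ≤ q := le_of_lt hq0
  set B' : ℝ := 2/α - 2 with hB'def
  have hB'0 : 0 < B' := by
    rw [hB'def]
    have h' : 2 < 2/α := by rw [lt_div_iff₀ hα0]; nlinarith
    linarith
  have hB'1 : B' < 1 := by
    rw [hB'def]
    have h' : 2/α < 3 := by rw [div_lt_iff₀ hα0]; linarith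
    linarith
  have hB'2 : B'/2 < 1 := by
    rw [div_lt_one (by norm_num : (0:ℝ) < 2)]; linarith
  set ρ₀ : ℝ := 27*q/2 with hρ₀def
  have hρ₀0 : 0 < ρ₀ := by rw [hρ₀def]; linarith
  have hρ₀1 : ρ₀ < 1 := by rw [hρ₀def]; linarith
  set c : ℝ := (1+ρ₀)/(2*ρ₀) with hcdef
  have hc1 : 1 < c := by rw [hcdef, lt_div_iff₀ (by linarith)]; linarith
  have hc0 : 0 < c := by linarith
  set lam₀ : ℝ := Real.log c with hlam₀def
  have hlam₀ : 0 < lam₀ := Real.log_pos hc1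
  have hexplam₀ : Real.exp lam₀ = c := Real.exp_log hc0
  set ρ2 : ℝ := 27*(q*c)/2 with hρ2def
  have hρ2eq : ρ2 = (1+ρ₀)/2 := by
    rw [hρ2def, hcdef, hρ₀def]; field_simp
  have hρ21 : ρ2 < 1 := by rw [hρ2eq]; linarith
  have hρ20 : 0 ≤ ρ2 := by rw [hρ2eq]; linarith
  set a : ℝ := -Real.log 54 with hadef
  have hexpa : Real.exp a = 1/54 := by
    rw [hadef, Real.exp_neg, Real.exp_log (by norm_num)]
    norm_num
  have ha0 : a < 0 := by
    rw [hadef, neg_lt, neg_zero]; exact Real.log_pos (by norm_num)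
  set b₀ : ℝ := -Real.log B' with hb₀def
  have hb₀ : 0 < b₀ := by
    have h' := Real.log_neg hB'0 hB'1
    rw [hb₀def]; linarith
  have hexpb₀ : Real.exp b₀ * B' = 1 := by
    rw [hb₀def, Real.exp_neg, Real.exp_log hB'0]
    field_simp
  set d : ℝ := lam₀ - a + b₀ with hddef
  have hd0 : 0 < d := by rw [hddef]; linarith
  set θ : ℝ := b₀/(2*d) with hθdef
  have hθ0 : 0 < θ := by rw [hθdef]; exact div_pos hb₀ (by linarith)
  have hθhalf : θ ≤ 1/2 := by
    rw [hθdef, div_le_div_iff₀ (by linarith) (by norm_num)]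
    linarith
  have hθ1 : θ < 1 := by linarith
  set lam : ℝ := θ * lam₀ with hlamdef
  have hlam0 : 0 < lam := mul_pos hθ0 hlam₀
  have h1θ : 0 < 1 - θ := by linarith
  have hla0 : 0 < lam₀ - a := by linarith
  set b : ℝ := θ*(lam₀ - a)/(1-θ) with hbdef
  have hb0 : 0 < b := by rw [hbdef]; exact div_pos (mul_pos hθ0 hla0) h1θ
  have hbb₀ : b < b₀ := by
    have h1 : b ≤ 2*(θ*(lam₀-a)) := by
      rw [hbdef, div_le_iff₀ h1θ]
      nlinarith [mul_pos hθ0 hla0]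
    have h2 : 2*(θ*(lam₀-a)) = b₀*(lam₀-a)/d := by
      rw [hθdef]; field_simp
    have h3 : b₀*(lam₀-a)/d < b₀ := by
      rw [div_lt_iff₀ hd0]
      nlinarith
    rw [h2] at h1
    linarith
  have hebB' : Real.exp b * B' < 1 := by
    have h' := Real.exp_lt_exp.mpr hbb₀
    calc Real.exp b * B' < Real.exp b₀ * B' := by nlinarith [Real.exp_pos b]
      _ = 1 := hexpb₀
  have hcoefY : θ*a + (1-θ)*b = lam := by
    have h' : (1-θ)*b = θ*(lam₀-a) := by rw [hbdef]; field_simp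
    rw [hlamdef]; linear_combination h'
  clear_value q B' ρ₀ c lam₀ ρ2 a b₀ d θ lam b
  -- the two weight functions
  set F : Ω → ENNReal :=
    fun ω => ENNReal.ofReal (Real.exp (a * (Y ω : ℝ) + lam₀ * (I ω : ℝ))) with hFdef
  set G : Ω → ENNReal := fun ω => ENNReal.ofReal (Real.exp (b * (Y ω : ℝ))) with hGdef
  have hFm : Measurable F := by
    have h' : F = (fun p : ℕ × ℕ =>
        ENNReal.ofReal (Real.exp (a * (p.1 : ℝ) + lam₀ * (p.2 : ℝ)))) ∘
        (fun ω => (Y ω, I ω)) := rfl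
    rw [h']; exact (measurable_of_countable _).comp (hY.prodMk hI)
  have hGm : Measurable G := by
    have h' : G = (fun i : ℕ => ENNReal.ofReal (Real.exp (b * (i : ℝ)))) ∘ Y := rfl
    rw [h']; exact (measurable_of_countable _).comp hY
  -- vanishing of off-diagonal mass at Y = 0
  have hms : ∀ j k' : ℕ, MeasurableSet {ω | Y ω = j ∧ I ω = k'} := by
    intro j k'
    have h' : {ω | Y ω = j ∧ I ω = k'} = Y ⁻¹' {j} ∩ I ⁻¹' {k'} := by
      ext ω; exact Iff.rfl
    rw [h']
    exact (hY (measurableSet_singleton j)).inter (hI (measurableSet_singleton k'))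
  have hzero : ∀ k, k ≠ 1 → μ {ω | Y ω = 0 ∧ I ω = k} = 0 := by
    intro k hk
    have hdisj : Disjoint {ω | Y ω = 0 ∧ I ω = 1} {ω | Y ω = 0 ∧ I ω = k} := by
      rw [Set.disjoint_left]
      rintro ω ⟨_, h1⟩ ⟨_, h2⟩
      rw [h1] at h2
      exact hk h2.symm
    have hsub : {ω | Y ω = 0 ∧ I ω = 1} ∪ {ω | Y ω = 0 ∧ I ω = k} ⊆ {ω | Y ω = 0} := by
      rintro ω (h' | h') <;> exact h'.1
    have hle : μ {ω | Y ω = 0 ∧ I ω = 1} + μ {ω | Y ω = 0 ∧ I ω = k}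
        ≤ μ {ω | Y ω = 0 ∧ I ω = 1} + 0 := by
      rw [add_zero, ← measure_union hdisj (hms 0 k)]
      calc μ ({ω | Y ω = 0 ∧ I ω = 1} ∪ {ω | Y ω = 0 ∧ I ω = k})
          ≤ μ {ω | Y ω = 0} := measure_mono hsub
        _ = ENNReal.ofReal α := h0
        _ = μ {ω | Y ω = 0 ∧ I ω = 1} := h0I.symm
    have hne : μ {ω | Y ω = 0 ∧ I ω = 1} ≠ ⊤ := by
      rw [h0I]; exact ENNReal.ofReal_ne_top
    exact le_antisymm (ENNReal.le_of_add_le_add_left hne hle) zero_le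
  -- finiteness of ∫ F
  have hK1 : ∫⁻ ω, F ω ∂μ < ⊤ := by
    have hFeq : ∫⁻ ω, F ω ∂μ = ∑' (i : ℕ), ∑' (k : ℕ), ENNReal.ofReal (Real.exp (a*(i:ℝ) + lam₀*(k:ℝ))) *
        μ {ω | Y ω = i ∧ I ω = k} := by
      simp only [hFdef]
      exact lint_pair μ Y I hY hI
        (fun i k => ENNReal.ofReal (Real.exp (a*(i:ℝ) + lam₀*(k:ℝ))))
    rw [hFeq]
    set r : ENNReal := ENNReal.ofReal (B'/2) with hrdef
    have hr1 : r < 1 := by rw [hrdef]; exact ENNReal.ofReal_lt_one.mpr hB'2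
    set Dρ : ENNReal := (1 - ENNReal.ofReal ρ2)⁻¹ with hDdef
    have hDlt : Dρ < ⊤ := by
      rw [hDdef, ENNReal.inv_lt_top]
      exact tsub_pos_iff_lt.mpr (ENNReal.ofReal_lt_one.mpr hρ21)
    set Kc : ENNReal := ENNReal.ofReal (Real.exp lam₀) + ENNReal.ofReal (27*C) * Dρ
      with hKcdef
    have hKclt : Kc < ⊤ := by
      rw [hKcdef]
      exact ENNReal.add_lt_top.mpr
        ⟨ENNReal.ofReal_lt_top, ENNReal.mul_lt_top ENNReal.ofReal_lt_top hDlt⟩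
    have hterm : ∀ (i : ℕ), (∑' (k : ℕ), ENNReal.ofReal (Real.exp (a*(i:ℝ) + lam₀*(k:ℝ))) *
        μ {ω | Y ω = i ∧ I ω = k}) ≤ Kc * r^i := by
      intro i
      rcases Nat.eq_zero_or_pos i with hi | hi
      · subst hi
        rw [tsum_eq_single 1 (fun k hk => by rw [hzero k hk, mul_zero])]
        rw [pow_zero, mul_one]
        calc ENNReal.ofReal (Real.exp (a*((0:ℕ):ℝ) + lam₀*((1:ℕ):ℝ))) *
            μ {ω | Y ω = 0 ∧ I ω = 1}
            ≤ ENNReal.ofReal (Real.exp lam₀) * 1 := by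
              apply mul_le_mul' (le_of_eq ?_) prob_le_one
              congr 1
              push_cast
              ring
          _ ≤ Kc := by rw [mul_one, hKcdef]; exact le_self_add
      · have hi1 : 1 ≤ i := hi
        have hZ : 1 ≤ Zgon (i+1) q := Zgon_ge_one (i+1) (by omega) hqnn hq2
        have hsingle : ∀ (k : ℕ), ENNReal.ofReal (Real.exp (a*(i:ℝ) + lam₀*(k:ℝ))) *
            μ {ω | Y ω = i ∧ I ω = k} ≤
            (ENNReal.ofReal (27*C) * r^i) * (ENNReal.ofReal ρ2)^k := by
          intro k
          rw [hcond i k hi1]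
          have hrp : ((i:ℝ))^(-(3:ℝ)/2) ≤ 1 :=
            Real.rpow_le_one_of_one_le_of_nonpos (by exact_mod_cast hi1) (by norm_num)
          have hrp0 : (0:ℝ) ≤ ((i:ℝ))^(-(3:ℝ)/2) := Real.rpow_nonneg (Nat.cast_nonneg i) _
          have hCB : (0:ℝ) ≤ C * B'^i := mul_nonneg hC.le (pow_nonneg hB'0.le i)
          have hCBrp : (0:ℝ) ≤ C * B'^i * ((i:ℝ)^(-(3:ℝ)/2)) := mul_nonneg hCB hrp0
          have h27C : (0:ℝ) ≤ 27*C := by linarith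
          have hB'2nn : (0:ℝ) ≤ B'/2 := by linarith
          have h27CBi : (0:ℝ) ≤ 27*C*(B'/2)^i := mul_nonneg h27C (pow_nonneg hB'2nn i)
          have hphiq : (0:ℝ) ≤ phiTri k (i+1) * q^k :=
            mul_nonneg (phiTri_nonneg _ _) (pow_nonneg hqnn k)
          have hdivnn : (0:ℝ) ≤ phiTri k (i+1) * q^k / Zgon (i+1) q :=
            div_nonneg hphiq (le_trans zero_le_one hZ)
          have hRT : Real.exp (a*(i:ℝ)+lam₀*(k:ℝ)) * (C*B'^i*((i:ℝ)^(-(3:ℝ)/2))) *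
              (phiTri k (i+1) * q^k / Zgon (i+1) q) ≤ (27*C*(B'/2)^i) * ρ2^k := by
            have hexpik : Real.exp (a*(i:ℝ)+lam₀*(k:ℝ)) = (1/54)^i * c^k := by
              rw [Real.exp_add, mul_comm a, mul_comm lam₀, Real.exp_nat_mul,
                Real.exp_nat_mul, hexpa, hexplam₀]
            have h1 : C*B'^i*((i:ℝ)^(-(3:ℝ)/2)) ≤ C*B'^i :=
              mul_le_of_le_one_right hCB hrp
            have hphi2 : phiTri k (i+1) * q^k ≤ 27^(i+1) * (27/2)^k * q^k :=
              mul_le_mul_of_nonneg_right (phiTri_le k (i+1)) (pow_nonneg hqnn k)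
            have h2 : phiTri k (i+1) * q^k / Zgon (i+1) q ≤ 27^(i+1) * (27/2)^k * q^k :=
              le_trans (div_le_self hphiq hZ) hphi2
            calc Real.exp (a*(i:ℝ)+lam₀*(k:ℝ)) * (C*B'^i*((i:ℝ)^(-(3:ℝ)/2))) *
                (phiTri k (i+1) * q^k / Zgon (i+1) q)
                ≤ ((1/54)^i * c^k) * (C*B'^i) * (27^(i+1) * (27/2)^k * q^k) := by
                  rw [hexpik]
                  have hA : (0:ℝ) ≤ (1/54:ℝ)^i * c^k :=
                    mul_nonneg (by positivity) (pow_nonneg hc0.le k)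
                  exact mul_le_mul (mul_le_mul_of_nonneg_left h1 hA) h2
                    hdivnn (mul_nonneg hA hCB)
              _ = (B'/2)^i * ρ2^k * (27*C) := by
                  rw [hρ2def, show (B'/2:ℝ) = 1/54*B'*27 from by ring,
                    show (27*(q*c)/2 : ℝ) = c*(27/2)*q from by ring,
                    mul_pow, mul_pow, mul_pow, mul_pow, pow_succ]
                  ring
              _ = (27*C*(B'/2)^i) * ρ2^k := by ring
          calc ENNReal.ofReal (Real.exp (a*(i:ℝ) + lam₀*(k:ℝ))) *
              (μ {ω | Y ω = i} *
                ENNReal.ofReal (phiTri k (i+1) * q^k / Zgon (i+1) q))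
              ≤ ENNReal.ofReal (Real.exp (a*(i:ℝ) + lam₀*(k:ℝ))) *
                (ENNReal.ofReal (C*B'^i*((i:ℝ)^(-(3:ℝ)/2))) *
                  ENNReal.ofReal (phiTri k (i+1) * q^k / Zgon (i+1) q)) := by
                gcongr
                exact htail i hi1
            _ = ENNReal.ofReal (Real.exp (a*(i:ℝ)+lam₀*(k:ℝ)) *
                  (C*B'^i*((i:ℝ)^(-(3:ℝ)/2))) *
                  (phiTri k (i+1) * q^k / Zgon (i+1) q)) := by
                rw [← ENNReal.ofReal_mul hCBrp, ← ENNReal.ofReal_mul (Real.exp_nonneg _)]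
                congr 1
                ring
            _ ≤ ENNReal.ofReal ((27*C*(B'/2)^i) * ρ2^k) := ENNReal.ofReal_le_ofReal hRT
            _ = (ENNReal.ofReal (27*C) * r^i) * (ENNReal.ofReal ρ2)^k := by
                rw [ENNReal.ofReal_mul h27CBi, ENNReal.ofReal_mul h27C,
                  ENNReal.ofReal_pow hB'2nn, ENNReal.ofReal_pow hρ20, ← hrdef]
        calc (∑' (k : ℕ), ENNReal.ofReal (Real.exp (a*(i:ℝ) + lam₀*(k:ℝ))) *
            μ {ω | Y ω = i ∧ I ω = k})
            ≤ ∑' k, (ENNReal.ofReal (27*C) * r^i) * (ENNReal.ofReal ρ2)^k :=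
              ENNReal.tsum_le_tsum hsingle
          _ = (ENNReal.ofReal (27*C) * r^i) * ∑' (k : ℕ), (ENNReal.ofReal ρ2)^k :=
              ENNReal.tsum_mul_left
          _ = (ENNReal.ofReal (27*C) * Dρ) * r^i := by
              rw [ENNReal.tsum_geometric, hDdef]; ring
          _ ≤ Kc * r^i := by
              apply mul_le_mul_left
              rw [hKcdef]; exact le_add_self
    calc (∑' (i : ℕ), ∑' (k : ℕ), ENNReal.ofReal (Real.exp (a*(i:ℝ) + lam₀*(k:ℝ))) *
        μ {ω | Y ω = i ∧ I ω = k})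
        ≤ ∑' (i : ℕ), Kc * r^i := ENNReal.tsum_le_tsum hterm
      _ = Kc * (1-r)⁻¹ := by rw [ENNReal.tsum_mul_left, ENNReal.tsum_geometric]
      _ < ⊤ := ENNReal.mul_lt_top hKclt (ENNReal.inv_lt_top.mpr (tsub_pos_iff_lt.mpr hr1))
  -- finiteness of ∫ G
  have hK2 : ∫⁻ ω, G ω ∂μ < ⊤ := by
    have hGeq : ∫⁻ ω, G ω ∂μ = ∑' (i : ℕ), ENNReal.ofReal (Real.exp (b*(i:ℝ))) *
        μ {ω | Y ω = i} := by
      simp only [hGdef]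
      exact lint_single μ Y hY (fun i => ENNReal.ofReal (Real.exp (b*(i:ℝ))))
    rw [hGeq]
    set r2 : ENNReal := ENNReal.ofReal (Real.exp b * B') with hr2def
    have hr21 : r2 < 1 := by rw [hr2def]; exact ENNReal.ofReal_lt_one.mpr hebB'
    have hterm : ∀ (i : ℕ), ENNReal.ofReal (Real.exp (b*(i:ℝ))) * μ {ω | Y ω = i} ≤
        (1 + ENNReal.ofReal C) * r2^i := by
      intro i
      rcases Nat.eq_zero_or_pos i with hi | hi
      · subst hi
        rw [pow_zero, mul_one]
        calc ENNReal.ofReal (Real.exp (b*((0:ℕ):ℝ))) * μ {ω | Y ω = 0}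
            ≤ 1 * 1 := by
              apply mul_le_mul' (le_of_eq ?_) prob_le_one
              push_cast
              rw [mul_zero, Real.exp_zero, ENNReal.ofReal_one]
          _ = 1 := mul_one 1
          _ ≤ 1 + ENNReal.ofReal C := le_self_add
      · have hi1 : 1 ≤ i := hi
        have hrp : ((i:ℝ))^(-(3:ℝ)/2) ≤ 1 :=
          Real.rpow_le_one_of_one_le_of_nonpos (by exact_mod_cast hi1) (by norm_num)
        have hrp0 : (0:ℝ) ≤ ((i:ℝ))^(-(3:ℝ)/2) := Real.rpow_nonneg (Nat.cast_nonneg i) _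
        have hCB : (0:ℝ) ≤ C * B'^i := mul_nonneg hC.le (pow_nonneg hB'0.le i)
        have hRT : Real.exp (b*(i:ℝ)) * (C*B'^i*((i:ℝ)^(-(3:ℝ)/2))) ≤
            C * (Real.exp b * B')^i := by
          have he : Real.exp (b*(i:ℝ)) = (Real.exp b)^i := by
            rw [mul_comm b, Real.exp_nat_mul]
          calc Real.exp (b*(i:ℝ)) * (C*B'^i*((i:ℝ)^(-(3:ℝ)/2)))
              ≤ Real.exp (b*(i:ℝ)) * (C*B'^i) :=
                mul_le_mul_of_nonneg_left (mul_le_of_le_one_right hCB hrp)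
                  (Real.exp_nonneg _)
            _ = C * (Real.exp b * B')^i := by rw [he, mul_pow]; ring
        calc ENNReal.ofReal (Real.exp (b*(i:ℝ))) * μ {ω | Y ω = i}
            ≤ ENNReal.ofReal (Real.exp (b*(i:ℝ))) *
              ENNReal.ofReal (C*B'^i*((i:ℝ)^(-(3:ℝ)/2))) := by
              gcongr
              exact htail i hi1
          _ = ENNReal.ofReal (Real.exp (b*(i:ℝ)) * (C*B'^i*((i:ℝ)^(-(3:ℝ)/2)))) :=
              (ENNReal.ofReal_mul (Real.exp_nonneg _)).symm
          _ ≤ ENNReal.ofReal (C * (Real.exp b * B')^i) := ENNReal.ofReal_le_ofReal hRT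
          _ = ENNReal.ofReal C * r2^i := by
              rw [ENNReal.ofReal_mul (le_of_lt hC),
                ENNReal.ofReal_pow (mul_nonneg (Real.exp_nonneg b) hB'0.le), ← hr2def]
          _ ≤ (1 + ENNReal.ofReal C) * r2^i := by
              apply mul_le_mul_left
              exact le_add_self
    calc (∑' (i : ℕ), ENNReal.ofReal (Real.exp (b*(i:ℝ))) * μ {ω | Y ω = i})
        ≤ ∑' (i : ℕ), (1 + ENNReal.ofReal C) * r2^i := ENNReal.tsum_le_tsum hterm
      _ = (1 + ENNReal.ofReal C) * (1-r2)⁻¹ := by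
          rw [ENNReal.tsum_mul_left, ENNReal.tsum_geometric]
      _ < ⊤ := ENNReal.mul_lt_top
          (ENNReal.add_lt_top.mpr ⟨ENNReal.one_lt_top, ENNReal.ofReal_lt_top⟩)
          (ENNReal.inv_lt_top.mpr (tsub_pos_iff_lt.mpr hr21))
  -- conclusion via Hölder
  refine ⟨lam, hlam0, ?_⟩
  have hpt : ∀ ω, ENNReal.ofReal (Real.exp (lam * ((Y ω : ℝ) + (I ω : ℝ)))) =
      (F ω)^θ * (G ω)^(1-θ) := by
    intro ω
    simp only [hFdef, hGdef]
    rw [ENNReal.ofReal_rpow_of_pos (Real.exp_pos _),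
      ENNReal.ofReal_rpow_of_pos (Real.exp_pos _), ← Real.exp_mul, ← Real.exp_mul,
      ← ENNReal.ofReal_mul (Real.exp_nonneg _), ← Real.exp_add]
    rw [ENNReal.ofReal_eq_ofReal_iff (Real.exp_nonneg _) (Real.exp_nonneg _), Real.exp_eq_exp]
    linear_combination (-((Y ω : ℝ))) * hcoefY + ((I ω : ℝ)) * hlamdef
  calc ∫⁻ ω, ENNReal.ofReal (Real.exp (lam * ((Y ω : ℝ) + (I ω : ℝ)))) ∂μ
      = ∫⁻ ω, (F ω)^θ * (G ω)^(1-θ) ∂μ := lintegral_congr hpt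
    _ ≤ (∫⁻ ω, F ω ∂μ)^θ * (∫⁻ ω, G ω ∂μ)^(1-θ) := holder_aux μ F G hFm hGm θ hθ0 hθ1
    _ < ⊤ := ENNReal.mul_lt_top
        (ENNReal.rpow_lt_top_of_nonneg (le_of_lt hθ0) hK1.ne)
        (ENNReal.rpow_lt_top_of_nonneg (by linarith) hK2.ne)
end

section
/- Consider a 'trap' graph of order n: n+1 disjoint triangles numbered 0,...,n arranged in sequence, with edges joining every vertex of triangle k to vertices of triangles k-1 and k+1 such that from any vertex of triangle k (0 < k < n) the walk moves to a vertex in triangle k-1, k, or k+1 each with probability 1/3. Then a simple random walk started at a vertex of triangle 1 has probability at least exp(-ct/n²) of being back at triangle 1 at time t, for any t > n³/2 and n sufficiently large, where c > 0 is an absolute constant. -/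
open Finset

/-- Vertices of the trap of order `n`: triangles `0,…,n`, each with 3 vertices. -/
abbrev TrapV (n : ℕ) := Fin (n + 1) × Fin 3

/-- Adjacency in the trap of order `n`: the three vertices of each triangle are
mutually adjacent, and each vertex of triangle `k` is joined to two vertices of
triangle `k+1` (and two of triangle `k-1`), so that from an interior triangle
the walk moves to triangles `k-1`, `k`, `k+1` with probability `1/3` each. -/
def trapAdj (n : ℕ) (v w : TrapV n) : Bool :=
  ((v.1 == w.1) && (v.2 != w.2)) ||
  (((v.1 : ℕ) + 1 == (w.1 : ℕ)) && (w.2 == v.2 || w.2 == v.2 + 1)) ||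
  (((w.1 : ℕ) + 1 == (v.1 : ℕ)) && (v.2 == w.2 || v.2 == w.2 + 1))

/-- Degree of a vertex in the trap graph. -/
def trapDeg (n : ℕ) (v : TrapV n) : ℕ :=
  (univ.filter (fun w => trapAdj n v w)).card

/-- One-step transition probability of simple random walk on the trap graph. -/
noncomputable def trapTrans (n : ℕ) (v w : TrapV n) : ℝ :=
  if trapAdj n v w then (trapDeg n v : ℝ)⁻¹ else 0

/-- Distribution at time `t` of simple random walk on the trap of order `n`
started at `start`. -/
noncomputable def trapWalk (n : ℕ) (start : TrapV n) : ℕ → TrapV n → ℝ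
  | 0, v => if v = start then 1 else 0
  | (t + 1), v => ∑ u : TrapV n, trapWalk n start t u * trapTrans n u v

lemma my_beq_comm {α : Type*} [DecidableEq α] (a b : α) : (a == b) = (b == a) := by
  rw [Bool.eq_iff_iff, beq_iff_eq, beq_iff_eq]; exact eq_comm

lemma my_bne_comm {α : Type*} [DecidableEq α] (a b : α) : (a != b) = (b != a) := by
  rw [Bool.eq_iff_iff, bne_iff_ne, bne_iff_ne]; exact ne_comm

lemma adj_symm (n : ℕ) (v w : TrapV n) : trapAdj n v w = trapAdj n w v := by
  simp only [trapAdj, Bool.or_comm, Bool.or_left_comm, Bool.or_assoc,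
    my_beq_comm v.1 w.1, my_bne_comm v.2 w.2]

lemma deg_pos (n : ℕ) (v : TrapV n) : 0 < trapDeg n v := by
  obtain ⟨k, b⟩ := v
  rw [trapDeg, Finset.card_pos]
  refine ⟨(k, b + 1), Finset.mem_filter.2 ⟨Finset.mem_univ _, ?_⟩⟩
  have hb : ¬ b = b + 1 := by revert b; decide
  simp [trapAdj, hb]

lemma deg_ne (n : ℕ) (v : TrapV n) : ((trapDeg n v : ℝ)) ≠ 0 := by
  exact_mod_cast (deg_pos n v).ne'

lemma trans_nonneg (n : ℕ) (v w : TrapV n) : 0 ≤ trapTrans n v w := by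
  unfold trapTrans; split
  · positivity
  · exact le_refl _

lemma trans_row_sum (n : ℕ) (v : TrapV n) : ∑ w : TrapV n, trapTrans n v w = 1 := by
  unfold trapTrans
  rw [Finset.sum_ite, Finset.sum_const_zero, add_zero, Finset.sum_const, nsmul_eq_mul]
  exact mul_inv_cancel₀ (deg_ne n v)

lemma trans_rev (n : ℕ) (v w : TrapV n) :
    trapTrans n v w * (trapDeg n v : ℝ) = trapTrans n w v * (trapDeg n w : ℝ) := by
  unfold trapTrans
  rw [adj_symm n v w]
  by_cases h : trapAdj n w v
  · simp [h, inv_mul_cancel₀ (deg_ne n v), inv_mul_cancel₀ (deg_ne n w)]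
  · simp [h]

lemma walk_nonneg (n : ℕ) (x : TrapV n) : ∀ t y, 0 ≤ trapWalk n x t y := by
  intro t
  induction t with
  | zero => intro y; unfold trapWalk; split <;> norm_num
  | succ t ih =>
    intro y
    unfold trapWalk
    exact Finset.sum_nonneg fun u _ => mul_nonneg (ih u) (trans_nonneg n u y)

lemma walk_one (n : ℕ) (x y : TrapV n) : trapWalk n x 1 y = trapTrans n x y := by
  show (∑ u : TrapV n, trapWalk n x 0 u * trapTrans n u y) = _
  unfold trapWalk
  rw [Finset.sum_eq_single x]
  · simp
  · intro u _ hu; simp [hu]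
  · intro h; exact absurd (Finset.mem_univ x) h

lemma walk_CK (n : ℕ) (x : TrapV n) (s : ℕ) :
    ∀ t y, trapWalk n x (s + t) y = ∑ u : TrapV n, trapWalk n x s u * trapWalk n u t y := by
  intro t
  induction t with
  | zero =>
    intro y
    rw [Nat.add_zero, Finset.sum_eq_single y]
    · simp [trapWalk]
    · intro u _ hu; unfold trapWalk; simp [Ne.symm hu]
    · intro h; exact absurd (Finset.mem_univ y) h
  | succ t ih =>
    intro y
    have h1 : trapWalk n x (s + (t + 1)) y
        = ∑ w : TrapV n, trapWalk n x (s + t) w * trapTrans n w y := rfl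
    have h2 : ∀ u : TrapV n, trapWalk n u (t + 1) y
        = ∑ w : TrapV n, trapWalk n u t w * trapTrans n w y := fun u => rfl
    rw [h1]
    simp_rw [h2, ih, Finset.sum_mul, Finset.mul_sum, mul_assoc]
    exact Finset.sum_comm

lemma walk_step_left (n : ℕ) (x : TrapV n) (t : ℕ) (y : TrapV n) :
    trapWalk n x (t + 1) y = ∑ u : TrapV n, trapTrans n x u * trapWalk n u t y := by
  have := walk_CK n x 1 t y
  rw [Nat.add_comm 1 t] at this
  rw [this]
  exact Finset.sum_congr rfl fun u _ => by rw [walk_one]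

lemma walk_mass (n : ℕ) (x : TrapV n) : ∀ t, ∑ y : TrapV n, trapWalk n x t y = 1 := by
  intro t
  induction t with
  | zero =>
    unfold trapWalk
    rw [Finset.sum_ite_eq' Finset.univ x (fun _ => (1:ℝ))]
    simp
  | succ t ih =>
    have h1 : ∀ y : TrapV n, trapWalk n x (t + 1) y
        = ∑ u : TrapV n, trapWalk n x t u * trapTrans n u y := fun y => rfl
    simp_rw [h1]
    rw [Finset.sum_comm]
    simp_rw [← Finset.mul_sum, trans_row_sum, mul_one]
    exact ih

lemma walk_rev (n : ℕ) : ∀ t (x y : TrapV n),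
    trapWalk n x t y * (trapDeg n x : ℝ) = trapWalk n y t x * (trapDeg n y : ℝ) := by
  intro t
  induction t with
  | zero =>
    intro x y
    unfold trapWalk
    by_cases h : y = x
    · subst h; simp
    · simp [h, Ne.symm h]
  | succ t ih =>
    intro x y
    have h1 : trapWalk n x (t + 1) y
        = ∑ u : TrapV n, trapWalk n x t u * trapTrans n u y := rfl
    rw [h1, Finset.sum_mul, walk_step_left n y t x, Finset.sum_mul]
    refine Finset.sum_congr rfl fun u _ => ?_
    have e1 : trapWalk n x t u * trapTrans n u y * (trapDeg n x : ℝ)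
        = (trapWalk n x t u * (trapDeg n x : ℝ)) * trapTrans n u y := by ring
    rw [e1, ih x u]
    have e2 : trapWalk n u t x * (trapDeg n u : ℝ) * trapTrans n u y
        = (trapTrans n u y * (trapDeg n u : ℝ)) * trapWalk n u t x := by ring
    rw [e2, trans_rev n u y]
    ring

lemma walk_diag (n : ℕ) (x : TrapV n) (s : ℕ) :
    (trapDeg n x : ℝ) / (∑ v : TrapV n, (trapDeg n v : ℝ)) ≤ trapWalk n x (s + s) x := by
  have hD : (0:ℝ) < ∑ v : TrapV n, (trapDeg n v : ℝ) := by
    refine Finset.sum_pos (fun v _ => by exact_mod_cast deg_pos n v) ⟨x, Finset.mem_univ x⟩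
  rw [walk_CK n x s s x]
  have key : ∀ u : TrapV n, trapWalk n x s u * trapWalk n u s x
      = (trapDeg n x : ℝ) * (trapWalk n x s u ^ 2 / (trapDeg n u : ℝ)) := by
    intro u
    have := walk_rev n s u x
    have h : trapWalk n u s x = trapWalk n x s u * (trapDeg n x : ℝ) / (trapDeg n u : ℝ) := by
      rw [eq_div_iff (deg_ne n u)]
      linarith [this]
    rw [h]; field_simp
  simp_rw [key, ← Finset.mul_sum]
  rw [div_eq_mul_inv]
  refine mul_le_mul_of_nonneg_left ?_ (by positivity)
  have CS := Finset.sq_sum_div_le_sum_sq_div Finset.univ (fun u => trapWalk n x s u)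
    (g := fun u => (trapDeg n u : ℝ)) (fun u _ => show (0:ℝ) < (trapDeg n u : ℝ) by exact_mod_cast deg_pos n u)
  rw [walk_mass n x s] at CS
  calc ((∑ v : TrapV n, (trapDeg n v : ℝ)))⁻¹ = 1 ^ 2 / (∑ v : TrapV n, (trapDeg n v : ℝ)) := by
        rw [one_pow, one_div]
    _ ≤ _ := CS

lemma D_pos (n : ℕ) : (0:ℝ) < ∑ v : TrapV n, (trapDeg n v : ℝ) :=
  Finset.sum_pos (fun v _ => by exact_mod_cast deg_pos n v) ⟨((0 : Fin (n+1)), 0), Finset.mem_univ _⟩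

lemma walk_ge_one_div_D (n : ℕ) (x : TrapV n) (s : ℕ) :
    (1:ℝ) / (∑ v : TrapV n, (trapDeg n v : ℝ)) ≤ trapWalk n x (s + s) x := by
  refine le_trans ?_ (walk_diag n x s)
  have hD := D_pos n
  gcongr
  exact_mod_cast deg_pos n x

lemma D_le (n : ℕ) : (∑ v : TrapV n, (trapDeg n v : ℝ)) ≤ 9 * ((n:ℝ) + 1) ^ 2 := by
  have hdeg : ∀ v : TrapV n, (trapDeg n v : ℝ) ≤ 3 * ((n:ℝ) + 1) := by
    intro v
    have h := Finset.card_filter_le Finset.univ (fun w => trapAdj n v w)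
    have hc : (Finset.univ : Finset (TrapV n)).card = (n + 1) * 3 := by simp
    rw [hc] at h
    calc (trapDeg n v : ℝ) ≤ (((n+1) * 3 : ℕ) : ℝ) := by exact_mod_cast h
      _ = 3 * ((n:ℝ) + 1) := by push_cast; ring
  calc (∑ v : TrapV n, (trapDeg n v : ℝ)) ≤ ∑ _v : TrapV n, 3 * ((n:ℝ) + 1) :=
        Finset.sum_le_sum fun v _ => hdeg v
    _ = (((n+1) * 3 : ℕ) : ℝ) * (3 * ((n:ℝ) + 1)) := by
        rw [Finset.sum_const, nsmul_eq_mul]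
        congr 1
        simp
    _ = 9 * ((n:ℝ) + 1) ^ 2 := by push_cast; ring

/-- A simple random walk started at a vertex of triangle `1` of a trap of
order `n` is again at triangle `1` at time `t` with probability at least
`exp(-c t/n²)`, for any `t > n³/2` and all large `n`, where `c > 0` is an
absolute constant. -/
theorem trap_return_probability :
    ∃ c > (0 : ℝ), ∃ N : ℕ, ∀ n : ℕ, N ≤ n → ∀ a : Fin 3, ∀ t : ℕ,
      (n : ℝ) ^ 3 / 2 < t →
      Real.exp (-c * t / (n : ℝ) ^ 2) ≤
        ∑ v ∈ univ.filter (fun v : TrapV n => v.1 = (1 : Fin (n + 1))),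
          trapWalk n ((1 : Fin (n + 1)), a) t v := by
  refine ⟨12, by norm_num, 2, fun n hn a t ht => ?_⟩
  have hn2 : (2:ℝ) ≤ (n:ℝ) := by exact_mod_cast hn
  have hnpos : (0:ℝ) < (n:ℝ) := by linarith
  set x : TrapV n := ((1 : Fin (n + 1)), a) with hx
  set D : ℝ := ∑ v : TrapV n, (trapDeg n v : ℝ) with hD
  have hDpos := D_pos n
  -- Step 1 : exp(-12 t / n²) ≤ exp (-6 n)
  have step1 : Real.exp (-12 * t / (n:ℝ) ^ 2) ≤ Real.exp (-6 * n) := by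
    rw [Real.exp_le_exp]
    rw [div_le_iff₀ (by positivity)]
    nlinarith [ht]
  -- Step 2 : exp (-6n) ≤ 1 / (9 (n+1)²)
  have step2 : Real.exp (-6 * (n:ℝ)) ≤ 1 / (9 * ((n:ℝ) + 1) ^ 2) := by
    rw [show (-6 * (n:ℝ)) = -(6 * n) by ring, Real.exp_neg, one_div]
    apply inv_anti₀ (by positivity)
    have h1 : (n:ℝ) + 1 ≤ Real.exp n := Real.add_one_le_exp n
    have h2 : ((n:ℝ) + 1) ^ 6 ≤ Real.exp (6 * n) := by
      calc ((n:ℝ) + 1) ^ 6 ≤ (Real.exp n) ^ 6 := by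
            exact pow_le_pow_left₀ (by positivity) h1 6
        _ = Real.exp (6 * n) := by
            rw [← Real.exp_nat_mul]; norm_num
    have h9 : (9:ℝ) ≤ ((n:ℝ) + 1) ^ 4 := by nlinarith [hn2]
    nlinarith [h2, h9, sq_nonneg ((n:ℝ) + 1)]
  -- Step 3 : 1 / (9(n+1)²) ≤ 1 / D
  have step3 : 1 / (9 * ((n:ℝ) + 1) ^ 2) ≤ 1 / D :=
    one_div_le_one_div_of_le hDpos (D_le n)
  -- Step 4 : 1 / D ≤ sum over triangle 1
  have step4 : 1 / D ≤
      ∑ v ∈ univ.filter (fun v : TrapV n => v.1 = (1 : Fin (n + 1))), trapWalk n x t v := by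
    rcases Nat.even_or_odd t with ⟨s, hs⟩ | ⟨s, hs⟩
    · -- even case
      subst hs
      have hx_mem : x ∈ univ.filter (fun v : TrapV n => v.1 = (1 : Fin (n + 1))) := by
        simp [hx]
      refine le_trans (walk_ge_one_div_D n x s) ?_
      exact Finset.single_le_sum (fun v _ => walk_nonneg n x (s + s) v) hx_mem
    · -- odd case
      have hs' : t = (s + s) + 1 := by omega
      subst hs'
      set v0 : TrapV n := ((1 : Fin (n + 1)), a + 1) with hv0
      have hv0_mem : v0 ∈ univ.filter (fun v : TrapV n => v.1 = (1 : Fin (n + 1))) := by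
        simp [hv0]
      have hne : ∀ b : Fin 3, ¬ b = b + 1 := by decide
      have hadj : trapAdj n x v0 = true := by
        simp [trapAdj, hx, hv0, hne a]
      have htrans : trapTrans n x v0 = (trapDeg n x : ℝ)⁻¹ := by
        rw [trapTrans, if_pos hadj]
      have hlow : 1 / D ≤ trapWalk n x ((s + s) + 1) v0 := by
        rw [walk_CK n x (s + s) 1 v0]
        have key : (trapDeg n x : ℝ) / D * (trapDeg n x : ℝ)⁻¹ ≤
            trapWalk n x (s + s) x * trapWalk n x 1 v0 := by
          rw [walk_one, htrans]
          apply mul_le_mul_of_nonneg_right (walk_diag n x s) (by positivity)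
        have hsingle : trapWalk n x (s + s) x * trapWalk n x 1 v0 ≤
            ∑ u : TrapV n, trapWalk n x (s + s) u * trapWalk n u 1 v0 :=
          Finset.single_le_sum
            (fun u _ => mul_nonneg (walk_nonneg n x (s+s) u) (walk_nonneg n u 1 v0))
            (Finset.mem_univ x)
        have heq : (trapDeg n x : ℝ) / D * (trapDeg n x : ℝ)⁻¹ = 1 / D := by
          rw [div_mul_eq_mul_div, mul_inv_cancel₀ (deg_ne n x)]
        linarith [key, hsingle, heq]
      refine le_trans hlow ?_
      exact Finset.single_le_sum (fun v _ => walk_nonneg n x ((s+s)+1) v) hv0_mem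
  calc Real.exp (-12 * t / (n:ℝ) ^ 2) ≤ Real.exp (-6 * n) := step1
    _ ≤ 1 / (9 * ((n:ℝ) + 1) ^ 2) := step2
    _ ≤ 1 / D := step3
    _ ≤ _ := step4
end
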